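/- arXiv:1705.03083 — 4 statements merged into one kernel-verified Lean document; each statement's English description precedes it below -/
import Mathlib

section
/- The assignment E ↦ e, F ↦ φ, K ↦ k², K⁻¹ ↦ k⁻² extends to a ℂ-algebra homomorphism ι : U → D which is injective and is a morphism of Hopf algebras: (ι ⊗ ι) ∘ Δ_U = Δ_D ∘ ι, ε_D ∘ ι = ε_U, and ι ∘ S_U = S_D ∘ ι. -/
open scoped TensorProduct
open Finset

noncomputable section

namespace LogHennings

/-- `q = exp(iπ/p)`. -/
def qq (p : ℕ) : ℂ := Complex.exp ((Real.pi : ℂ) * Complex.I / (p : ℂ))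

/-- `q^{1/2} = exp(iπ/(2p))`. -/
def qh (p : ℕ) : ℂ := Complex.exp ((Real.pi : ℂ) * Complex.I / (2 * (p : ℂ)))

/-- quantum integer `[m] = (q^m - q^{-m})/(q - q⁻¹)`. -/
def qnum (p m : ℕ) : ℂ := ((qq p) ^ m - (qq p)⁻¹ ^ m) / (qq p - (qq p)⁻¹)

/-- quantum factorial `[m]! = [m][m-1]⋯[1]`. -/
def qfac (p : ℕ) : ℕ → ℂ
  | 0 => 1
  | m + 1 => qnum p (m + 1) * qfac p m

/-- Generators of the restricted quantum group `U`. -/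
inductive UGen | E | F | K | Kinv

abbrev FU := FreeAlgebra ℂ UGen

def fE : FU := FreeAlgebra.ι ℂ UGen.E
def fF : FU := FreeAlgebra.ι ℂ UGen.F
def fK : FU := FreeAlgebra.ι ℂ UGen.K
def fKinv : FU := FreeAlgebra.ι ℂ UGen.Kinv

/-- Defining relations of the restricted quantum group `U`. -/
inductive URel (p : ℕ) : FU → FU → Prop
  | Epow : URel p (fE ^ p) 0
  | Fpow : URel p (fF ^ p) 0
  | Kpow : URel p (fK ^ (2 * p)) 1
  | KKinv : URel p (fK * fKinv) 1
  | KinvK : URel p (fKinv * fK) 1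
  | KE : URel p (fK * fE * fKinv) ((qq p) ^ 2 • fE)
  | KF : URel p (fK * fF * fKinv) (((qq p) ^ 2)⁻¹ • fF)
  | EF : URel p (fE * fF - fF * fE) ((qq p - (qq p)⁻¹)⁻¹ • (fK - fKinv))

/-- The restricted quantum group `U = \bar U_q(sl2)`. -/
abbrev Uq (p : ℕ) := RingQuot (URel p)

def UE (p : ℕ) : Uq p := RingQuot.mkAlgHom ℂ (URel p) fE
def UF (p : ℕ) : Uq p := RingQuot.mkAlgHom ℂ (URel p) fF
def UK (p : ℕ) : Uq p := RingQuot.mkAlgHom ℂ (URel p) fK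
def UKinv (p : ℕ) : Uq p := RingQuot.mkAlgHom ℂ (URel p) fKinv

/-- Generators of the braided extension `D`. -/
inductive DGen | e | phi | k | kinv

abbrev FD := FreeAlgebra ℂ DGen

def fe : FD := FreeAlgebra.ι ℂ DGen.e
def fphi : FD := FreeAlgebra.ι ℂ DGen.phi
def fk : FD := FreeAlgebra.ι ℂ DGen.k
def fkinv : FD := FreeAlgebra.ι ℂ DGen.kinv

/-- Defining relations of `D`. -/
inductive DRel (p : ℕ) : FD → FD → Prop
  | epow : DRel p (fe ^ p) 0
  | phipow : DRel p (fphi ^ p) 0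
  | kpow : DRel p (fk ^ (4 * p)) 1
  | kkinv : DRel p (fk * fkinv) 1
  | kinvk : DRel p (fkinv * fk) 1
  | ke : DRel p (fk * fe * fkinv) (qq p • fe)
  | kphi : DRel p (fk * fphi * fkinv) ((qq p)⁻¹ • fphi)
  | ephi : DRel p (fe * fphi - fphi * fe)
      ((qq p - (qq p)⁻¹)⁻¹ • (fk ^ 2 - fkinv ^ 2))

/-- The braided extension `D` of `U`. -/
abbrev Dq (p : ℕ) := RingQuot (DRel p)

def De (p : ℕ) : Dq p := RingQuot.mkAlgHom ℂ (DRel p) fe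
def Dphi (p : ℕ) : Dq p := RingQuot.mkAlgHom ℂ (DRel p) fphi
def Dk (p : ℕ) : Dq p := RingQuot.mkAlgHom ℂ (DRel p) fk
def Dkinv (p : ℕ) : Dq p := RingQuot.mkAlgHom ℂ (DRel p) fkinv

/-- The `R`-matrix of `D`. -/
def Rmat (p : ℕ) : Dq p ⊗[ℂ] Dq p :=
  ((4 * (p : ℂ))⁻¹) •
    ∑ m ∈ range p, ∑ n ∈ range (4 * p), ∑ j ∈ range (4 * p),
      (((qq p - (qq p)⁻¹) ^ m / qfac p m) *
          (qh p) ^ ((m : ℤ) * ((m : ℤ) - 1) + 2 * (m : ℤ) * ((n : ℤ) - (j : ℤ))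
            - (n : ℤ) * (j : ℤ))) •
        ((De p ^ m * Dk p ^ n) ⊗ₜ[ℂ] (Dphi p ^ m * Dk p ^ j))

/-- `R₂₁ = τ(R)`. -/
def R21 (p : ℕ) : Dq p ⊗[ℂ] Dq p := TensorProduct.comm ℂ (Dq p) (Dq p) (Rmat p)

/-- The monodromy `M = R₂₁ R`. -/
def Mmat (p : ℕ) : Dq p ⊗[ℂ] Dq p := R21 p * Rmat p

/-- The ribbon element `r ∈ D`. -/
def rib (p : ℕ) : Dq p :=
  ((1 - Complex.I) / (2 * (Real.sqrt p : ℂ))) •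
    ∑ m ∈ range p, ∑ j ∈ range (2 * p),
      (((qq p - (qq p)⁻¹) ^ m / qfac p m) *
          (qh p) ^ (-(m : ℤ) + 2 * (m : ℤ) * (j : ℤ) + ((j : ℤ) + (p : ℤ) + 1) ^ 2)) •
        (Dphi p ^ m * De p ^ m * Dk p ^ (2 * j))

/-- The Drinfeld element `u = Σ S(β_i) α_i` for `R = Σ α_i ⊗ β_i`,
depending on a choice of antipode `S`. -/
def drinfeldU (p : ℕ) (S : Dq p →ₗ[ℂ] Dq p) : Dq p :=
  LinearMap.mul' ℂ (Dq p) (TensorProduct.map S LinearMap.id (R21 p))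

/-- `Δ` takes the prescribed values on the generators of `U`. -/
def IsDeltaU (p : ℕ) (Δ : Uq p →ₐ[ℂ] Uq p ⊗[ℂ] Uq p) : Prop :=
  Δ (UE p) = 1 ⊗ₜ[ℂ] UE p + UE p ⊗ₜ[ℂ] UK p ∧
  Δ (UF p) = UKinv p ⊗ₜ[ℂ] UF p + UF p ⊗ₜ[ℂ] 1 ∧
  Δ (UK p) = UK p ⊗ₜ[ℂ] UK p ∧
  Δ (UKinv p) = UKinv p ⊗ₜ[ℂ] UKinv p

/-- `ε` takes the prescribed values on the generators of `U`. -/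
def IsCounitU (p : ℕ) (ε : Uq p →ₐ[ℂ] ℂ) : Prop :=
  ε (UE p) = 0 ∧ ε (UF p) = 0 ∧ ε (UK p) = 1 ∧ ε (UKinv p) = 1

/-- `S` is an algebra anti-homomorphism taking the prescribed values on the
generators of `U`. -/
def IsAntipodeU (p : ℕ) (S : Uq p →ₗ[ℂ] Uq p) : Prop :=
  S 1 = 1 ∧ (∀ x y, S (x * y) = S y * S x) ∧
  S (UE p) = -(UE p * UKinv p) ∧ S (UF p) = -(UK p * UF p) ∧
  S (UK p) = UKinv p ∧ S (UKinv p) = UK p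

/-- `Δ` takes the prescribed values on the generators of `D`. -/
def IsDeltaD (p : ℕ) (Δ : Dq p →ₐ[ℂ] Dq p ⊗[ℂ] Dq p) : Prop :=
  Δ (De p) = 1 ⊗ₜ[ℂ] De p + De p ⊗ₜ[ℂ] (Dk p ^ 2) ∧
  Δ (Dphi p) = (Dkinv p ^ 2) ⊗ₜ[ℂ] Dphi p + Dphi p ⊗ₜ[ℂ] 1 ∧
  Δ (Dk p) = Dk p ⊗ₜ[ℂ] Dk p ∧
  Δ (Dkinv p) = Dkinv p ⊗ₜ[ℂ] Dkinv p

/-- `ε` takes the prescribed values on the generators of `D`. -/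
def IsCounitD (p : ℕ) (ε : Dq p →ₐ[ℂ] ℂ) : Prop :=
  ε (De p) = 0 ∧ ε (Dphi p) = 0 ∧ ε (Dk p) = 1 ∧ ε (Dkinv p) = 1

/-- `S` is an algebra anti-homomorphism taking the prescribed values on the
generators of `D`. -/
def IsAntipodeD (p : ℕ) (S : Dq p →ₗ[ℂ] Dq p) : Prop :=
  S 1 = 1 ∧ (∀ x y, S (x * y) = S y * S x) ∧
  S (De p) = -(De p * Dkinv p ^ 2) ∧ S (Dphi p) = -(Dk p ^ 2 * Dphi p) ∧
  S (Dk p) = Dkinv p ∧ S (Dkinv p) = Dk p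

/-- `ι` takes the prescribed values `E ↦ e`, `F ↦ φ`, `K^{±1} ↦ k^{±2}`. -/
def IsIota (p : ℕ) (ι : Uq p →ₐ[ℂ] Dq p) : Prop :=
  ι (UE p) = De p ∧ ι (UF p) = Dphi p ∧ ι (UK p) = Dk p ^ 2 ∧
  ι (UKinv p) = Dkinv p ^ 2

/-- `μ` takes the prescribed values on the PBW basis of `U`. -/
def IsMu (p : ℕ) (μ : Uq p →ₗ[ℂ] ℂ) : Prop :=
  ∀ m n l : ℕ, m < p → n < p → l < 2 * p →
    μ (UE p ^ m * UF p ^ n * UK p ^ l) =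
      if m = p - 1 ∧ n = p - 1 ∧ l = p + 1 then
        -((Real.sqrt (2 / (p : ℝ)) : ℂ)) * (qfac p (p - 1)) ^ 2
      else 0

variable {A : Type*} [Ring A] [Algebra ℂ A]

/-- Coassociativity of a comultiplication. -/
def Coassoc (Δ : A →ₐ[ℂ] A ⊗[ℂ] A) : Prop :=
  ∀ x, TensorProduct.assoc ℂ A A A
      (TensorProduct.map Δ.toLinearMap LinearMap.id (Δ x)) =
    TensorProduct.map LinearMap.id Δ.toLinearMap (Δ x)

/-- The counit axiom. -/
def CounitAxiom (Δ : A →ₐ[ℂ] A ⊗[ℂ] A) (ε : A →ₐ[ℂ] ℂ) : Prop :=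
  (∀ x, TensorProduct.lid ℂ A
      (TensorProduct.map ε.toLinearMap LinearMap.id (Δ x)) = x) ∧
  (∀ x, TensorProduct.rid ℂ A
      (TensorProduct.map LinearMap.id ε.toLinearMap (Δ x)) = x)

/-- The antipode axiom. -/
def AntipodeAxiom (Δ : A →ₐ[ℂ] A ⊗[ℂ] A) (ε : A →ₐ[ℂ] ℂ)
    (S : A →ₗ[ℂ] A) : Prop :=
  (∀ x, LinearMap.mul' ℂ A (TensorProduct.map S LinearMap.id (Δ x)) = ε x • 1) ∧
  (∀ x, LinearMap.mul' ℂ A (TensorProduct.map LinearMap.id S (Δ x)) = ε x • 1)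

/-- `x ↦ x ⊗ 1`. -/
def e1 (p : ℕ) : Dq p →ₗ[ℂ] Dq p ⊗[ℂ] Dq p :=
  (TensorProduct.mk ℂ (Dq p) (Dq p)).flip 1

/-- `x ↦ 1 ⊗ x`. -/
def e2 (p : ℕ) : Dq p →ₗ[ℂ] Dq p ⊗[ℂ] Dq p :=
  TensorProduct.mk ℂ (Dq p) (Dq p) 1

/-- The balancing element `g = K^{p+1}`. -/
def gU (p : ℕ) : Uq p := UK p ^ (p + 1)

/-- The span of commutators `[U,U]`. -/
def commSpan (p : ℕ) : Submodule ℂ (Uq p) :=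
  Submodule.span ℂ {z : Uq p | ∃ x y : Uq p, z = x * y - y * x}

end LogHennings

namespace IotaAux
open LogHennings

variable (p : ℕ)

lemma qne : qq p ≠ 0 := Complex.exp_ne_zero _

/-! ### Relations in `Uq` -/

lemma uEp : UE p ^ p = 0 := by
  have h := RingQuot.mkAlgHom_rel ℂ (URel.Epow (p := p))
  simpa only [map_pow, map_zero, UE] using h

lemma uFp : UF p ^ p = 0 := by
  have h := RingQuot.mkAlgHom_rel ℂ (URel.Fpow (p := p))
  simpa only [map_pow, map_zero, UF] using h

lemma uK2p : UK p ^ (2 * p) = 1 := by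
  have h := RingQuot.mkAlgHom_rel ℂ (URel.Kpow (p := p))
  simpa only [map_pow, map_one, UK] using h

lemma uKKinv : UK p * UKinv p = 1 := by
  have h := RingQuot.mkAlgHom_rel ℂ (URel.KKinv (p := p))
  simpa only [map_mul, map_one, UK, UKinv] using h

lemma uKinvK : UKinv p * UK p = 1 := by
  have h := RingQuot.mkAlgHom_rel ℂ (URel.KinvK (p := p))
  simpa only [map_mul, map_one, UK, UKinv] using h

lemma uKE : UK p * UE p * UKinv p = qq p ^ 2 • UE p := by
  have h := RingQuot.mkAlgHom_rel ℂ (URel.KE (p := p))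
  simpa only [map_mul, map_smul, UK, UE, UKinv] using h

lemma uKF : UK p * UF p * UKinv p = (qq p ^ 2)⁻¹ • UF p := by
  have h := RingQuot.mkAlgHom_rel ℂ (URel.KF (p := p))
  simpa only [map_mul, map_smul, UK, UF, UKinv] using h

lemma uEF : UE p * UF p - UF p * UE p
    = (qq p - (qq p)⁻¹)⁻¹ • (UK p - UKinv p) := by
  have h := RingQuot.mkAlgHom_rel ℂ (URel.EF (p := p))
  simpa only [map_mul, map_sub, map_smul, UE, UF, UK, UKinv] using h

/-! ### Relations in `Dq` -/

lemma dEp : De p ^ p = 0 := by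
  have h := RingQuot.mkAlgHom_rel ℂ (DRel.epow (p := p))
  simpa only [map_pow, map_zero, De] using h

lemma dPhip : Dphi p ^ p = 0 := by
  have h := RingQuot.mkAlgHom_rel ℂ (DRel.phipow (p := p))
  simpa only [map_pow, map_zero, Dphi] using h

lemma dK4p : Dk p ^ (4 * p) = 1 := by
  have h := RingQuot.mkAlgHom_rel ℂ (DRel.kpow (p := p))
  simpa only [map_pow, map_one, Dk] using h

lemma dKKinv : Dk p * Dkinv p = 1 := by
  have h := RingQuot.mkAlgHom_rel ℂ (DRel.kkinv (p := p))
  simpa only [map_mul, map_one, Dk, Dkinv] using h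

lemma dKinvK : Dkinv p * Dk p = 1 := by
  have h := RingQuot.mkAlgHom_rel ℂ (DRel.kinvk (p := p))
  simpa only [map_mul, map_one, Dk, Dkinv] using h

lemma dKE : Dk p * De p * Dkinv p = qq p • De p := by
  have h := RingQuot.mkAlgHom_rel ℂ (DRel.ke (p := p))
  simpa only [map_mul, map_smul, Dk, De, Dkinv] using h

lemma dKPhi : Dk p * Dphi p * Dkinv p = (qq p)⁻¹ • Dphi p := by
  have h := RingQuot.mkAlgHom_rel ℂ (DRel.kphi (p := p))
  simpa only [map_mul, map_smul, Dk, Dphi, Dkinv] using h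

lemma dEPhi : De p * Dphi p - Dphi p * De p
    = (qq p - (qq p)⁻¹)⁻¹ • (Dk p ^ 2 - Dkinv p ^ 2) := by
  have h := RingQuot.mkAlgHom_rel ℂ (DRel.ephi (p := p))
  simpa only [map_mul, map_sub, map_smul, map_pow, De, Dphi, Dk, Dkinv] using h

/-- conjugating twice. -/
lemma conj_sq {A : Type*} [Ring A] [Algebra ℂ A] (k kinv x : A) (c : ℂ)
    (h : k * x * kinv = c • x) : k ^ 2 * x * kinv ^ 2 = c ^ 2 • x := by
  calc k ^ 2 * x * kinv ^ 2 = k * (k * x * kinv) * kinv := by noncomm_ring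
    _ = k * (c • x) * kinv := by rw [h]
    _ = c • (k * x * kinv) := by simp [mul_smul_comm, smul_mul_assoc]
    _ = c • (c • x) := by rw [h]
    _ = c ^ 2 • x := by rw [smul_smul, sq]

lemma dK2Kinv2 : Dk p ^ 2 * Dkinv p ^ 2 = 1 := by
  have h : Dk p ^ 2 * Dkinv p ^ 2 = Dk p * (Dk p * Dkinv p) * Dkinv p := by
    noncomm_ring
  rw [h, dKKinv, mul_one, dKKinv]

lemma dKinv2K2 : Dkinv p ^ 2 * Dk p ^ 2 = 1 := by
  have h : Dkinv p ^ 2 * Dk p ^ 2 = Dkinv p * (Dkinv p * Dk p) * Dk p := by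
    noncomm_ring
  rw [h, dKinvK, mul_one, dKinvK]

end IotaAux

namespace IotaAux
open LogHennings
variable (p : ℕ)

/-! ### The embedding `ι` -/

def iotaF : FU →ₐ[ℂ] Dq p :=
  FreeAlgebra.lift ℂ (fun g => match g with
    | UGen.E => De p
    | UGen.F => Dphi p
    | UGen.K => Dk p ^ 2
    | UGen.Kinv => Dkinv p ^ 2)

@[simp] lemma iotaF_E : iotaF p fE = De p := by
  simp [iotaF, fE]
@[simp] lemma iotaF_F : iotaF p fF = Dphi p := by
  simp [iotaF, fF]
@[simp] lemma iotaF_K : iotaF p fK = Dk p ^ 2 := by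
  simp [iotaF, fK]
@[simp] lemma iotaF_Kinv : iotaF p fKinv = Dkinv p ^ 2 := by
  simp [iotaF, fKinv]

lemma iotaF_rel : ∀ ⦃a b : FU⦄, URel p a b → iotaF p a = iotaF p b := by
  intro a b h
  induction h with
  | Epow => simp [map_pow, dEp]
  | Fpow => simp [map_pow, dPhip]
  | Kpow =>
      simp only [map_pow, map_one, iotaF_K]
      rw [← pow_mul, show 2 * (2 * p) = 4 * p by ring, dK4p]
  | KKinv => simp [map_mul, dK2Kinv2]
  | KinvK => simp [map_mul, dKinv2K2]
  | KE =>
      simp only [map_mul, map_smul, iotaF_K, iotaF_E, iotaF_Kinv]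
      exact conj_sq _ _ _ _ (dKE p)
  | KF =>
      simp only [map_mul, map_smul, iotaF_K, iotaF_F, iotaF_Kinv]
      rw [conj_sq _ _ _ _ (dKPhi p), inv_pow]
  | EF =>
      simp only [map_mul, map_sub, map_smul, iotaF_E, iotaF_F, iotaF_K,
        iotaF_Kinv]
      exact dEPhi p

def iota : Uq p →ₐ[ℂ] Dq p := RingQuot.liftAlgHom ℂ ⟨iotaF p, iotaF_rel p⟩

@[simp] lemma iota_E : iota p (UE p) = De p := by
  rw [UE, iota, RingQuot.liftAlgHom_mkAlgHom_apply]; simp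
@[simp] lemma iota_F : iota p (UF p) = Dphi p := by
  rw [UF, iota, RingQuot.liftAlgHom_mkAlgHom_apply]; simp
@[simp] lemma iota_K : iota p (UK p) = Dk p ^ 2 := by
  rw [UK, iota, RingQuot.liftAlgHom_mkAlgHom_apply]; simp
@[simp] lemma iota_Kinv : iota p (UKinv p) = Dkinv p ^ 2 := by
  rw [UKinv, iota, RingQuot.liftAlgHom_mkAlgHom_apply]; simp

/-- Two algebra maps out of `Uq p` agreeing on the generators are equal. -/
lemma Uq_algHom_ext {B : Type*} [Semiring B] [Algebra ℂ B]
    {f g : Uq p →ₐ[ℂ] B} (hE : f (UE p) = g (UE p)) (hF : f (UF p) = g (UF p))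
    (hK : f (UK p) = g (UK p)) (hKinv : f (UKinv p) = g (UKinv p)) : f = g := by
  apply AlgHom.ext
  intro x
  obtain ⟨a, rfl⟩ := RingQuot.mkAlgHom_surjective ℂ (URel p) x
  induction a using FreeAlgebra.induction with
  | grade0 r => simp [AlgHom.commutes]
  | grade1 x =>
      cases x
      · exact hE
      · exact hF
      · exact hK
      · exact hKinv
  | mul a b ha hb => simp only [map_mul, ha, hb]
  | add a b ha hb => simp only [map_add, ha, hb]

end IotaAux

namespace IotaAux
open LogHennings
variable (p : ℕ)

/-! ### Derived commutation relations in `Uq` -/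

lemma uKE' : UK p * UE p = qq p ^ 2 • (UE p * UK p) := by
  have h2 : UK p * UE p * (UKinv p * UK p) = (qq p ^ 2 • UE p) * UK p := by
    rw [← mul_assoc, uKE]
  simpa only [uKinvK, mul_one, smul_mul_assoc] using h2

lemma uKF' : UK p * UF p = (qq p ^ 2)⁻¹ • (UF p * UK p) := by
  have h2 : UK p * UF p * (UKinv p * UK p) = ((qq p ^ 2)⁻¹ • UF p) * UK p := by
    rw [← mul_assoc, uKF]
  simpa only [uKinvK, mul_one, smul_mul_assoc] using h2

lemma uEKinv : UE p * UKinv p = qq p ^ 2 • (UKinv p * UE p) := by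
  have h2 : UKinv p * (UK p * UE p * UKinv p) = qq p ^ 2 • (UKinv p * UE p) := by
    rw [uKE, mul_smul_comm]
  rw [show UK p * UE p * UKinv p = UK p * (UE p * UKinv p) from
    mul_assoc _ _ _, ← mul_assoc, uKinvK, one_mul] at h2
  exact h2

lemma uFKinv : UF p * UKinv p = (qq p ^ 2)⁻¹ • (UKinv p * UF p) := by
  have h2 : UKinv p * (UK p * UF p * UKinv p)
      = (qq p ^ 2)⁻¹ • (UKinv p * UF p) := by
    rw [uKF, mul_smul_comm]
  rw [show UK p * UF p * UKinv p = UK p * (UF p * UKinv p) from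
    mul_assoc _ _ _, ← mul_assoc, uKinvK, one_mul] at h2
  exact h2

lemma q2ne : qq p ^ 2 ≠ 0 := pow_ne_zero _ (qne p)

lemma uKinvE : UKinv p * UE p = (qq p ^ 2)⁻¹ • (UE p * UKinv p) := by
  symm; rw [inv_smul_eq_iff₀ (q2ne p)]; exact uEKinv p

lemma uKinvF : UKinv p * UF p = qq p ^ 2 • (UF p * UKinv p) := by
  symm
  rw [uFKinv, smul_smul, mul_inv_cancel₀ (q2ne p), one_smul]

/-! ### The twist automorphism `σ` -/

def sigF (c : ℂ) : FU →ₐ[ℂ] Uq p :=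
  FreeAlgebra.lift ℂ (fun g => match g with
    | UGen.E => c • UE p
    | UGen.F => c⁻¹ • UF p
    | UGen.K => UK p
    | UGen.Kinv => UKinv p)

@[simp] lemma sigF_E (c : ℂ) : sigF p c fE = c • UE p := by simp [sigF, fE]
@[simp] lemma sigF_F (c : ℂ) : sigF p c fF = c⁻¹ • UF p := by simp [sigF, fF]
@[simp] lemma sigF_K (c : ℂ) : sigF p c fK = UK p := by simp [sigF, fK]
@[simp] lemma sigF_Kinv (c : ℂ) : sigF p c fKinv = UKinv p := by
  simp [sigF, fKinv]

lemma sigF_rel (c : ℂ) (hc : c ≠ 0) :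
    ∀ ⦃a b : FU⦄, URel p a b → sigF p c a = sigF p c b := by
  intro a b h
  induction h with
  | Epow => simp [map_pow, smul_pow, uEp]
  | Fpow => simp [map_pow, smul_pow, uFp]
  | Kpow => simp [map_pow, uK2p]
  | KKinv => simp [map_mul, uKKinv]
  | KinvK => simp [map_mul, uKinvK]
  | KE =>
      simp only [map_mul, map_smul, sigF_E, sigF_K, sigF_Kinv,
        mul_smul_comm, smul_mul_assoc, uKE, smul_smul]
      rw [mul_comm]
  | KF =>
      simp only [map_mul, map_smul, sigF_F, sigF_K, sigF_Kinv,
        mul_smul_comm, smul_mul_assoc, uKF, smul_smul]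
      rw [mul_comm]
  | EF =>
      simp only [map_mul, map_sub, map_smul, sigF_E, sigF_F, sigF_K, sigF_Kinv,
        mul_smul_comm, smul_mul_assoc, smul_smul, mul_inv_cancel₀ hc,
        inv_mul_cancel₀ hc, one_smul]
      exact uEF p

def sig : Uq p →ₐ[ℂ] Uq p :=
  RingQuot.liftAlgHom ℂ ⟨sigF p (qq p), sigF_rel p (qq p) (qne p)⟩

def sig' : Uq p →ₐ[ℂ] Uq p :=
  RingQuot.liftAlgHom ℂ ⟨sigF p (qq p)⁻¹, sigF_rel p (qq p)⁻¹
    (inv_ne_zero (qne p))⟩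

@[simp] lemma sig_E : sig p (UE p) = qq p • UE p := by
  rw [UE, sig, RingQuot.liftAlgHom_mkAlgHom_apply]; simp [UE]
@[simp] lemma sig_F : sig p (UF p) = (qq p)⁻¹ • UF p := by
  rw [UF, sig, RingQuot.liftAlgHom_mkAlgHom_apply]; simp [UF]
@[simp] lemma sig_K : sig p (UK p) = UK p := by
  rw [UK, sig, RingQuot.liftAlgHom_mkAlgHom_apply]; simp [UK]
@[simp] lemma sig_Kinv : sig p (UKinv p) = UKinv p := by
  rw [UKinv, sig, RingQuot.liftAlgHom_mkAlgHom_apply]; simp [UKinv]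

@[simp] lemma sig'_E : sig' p (UE p) = (qq p)⁻¹ • UE p := by
  rw [UE, sig', RingQuot.liftAlgHom_mkAlgHom_apply]; simp [UE]
@[simp] lemma sig'_F : sig' p (UF p) = qq p • UF p := by
  rw [UF, sig', RingQuot.liftAlgHom_mkAlgHom_apply]; simp [UF, inv_inv]
@[simp] lemma sig'_K : sig' p (UK p) = UK p := by
  rw [UK, sig', RingQuot.liftAlgHom_mkAlgHom_apply]; simp [UK]
@[simp] lemma sig'_Kinv : sig' p (UKinv p) = UKinv p := by
  rw [UKinv, sig', RingQuot.liftAlgHom_mkAlgHom_apply]; simp [UKinv]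

@[simp] lemma sig_sig' (x : Uq p) : sig p (sig' p x) = x := by
  have h : (sig p).comp (sig' p) = AlgHom.id ℂ (Uq p) := by
    apply Uq_algHom_ext <;>
      simp [smul_smul, mul_inv_cancel₀ (qne p), inv_mul_cancel₀ (qne p)]
  exact AlgHom.congr_fun h x

@[simp] lemma sig'_sig (x : Uq p) : sig' p (sig p x) = x := by
  have h : (sig' p).comp (sig p) = AlgHom.id ℂ (Uq p) := by
    apply Uq_algHom_ext <;>
      simp [smul_smul, mul_inv_cancel₀ (qne p), inv_mul_cancel₀ (qne p)]
  exact AlgHom.congr_fun h x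

lemma sig_sig_K (x : Uq p) : sig p (sig p x) * UK p = UK p * x := by
  obtain ⟨a, rfl⟩ := RingQuot.mkAlgHom_surjective ℂ (URel p) x
  induction a using FreeAlgebra.induction with
  | grade0 r => simp [AlgHom.commutes, Algebra.commutes]
  | grade1 g =>
      cases g
      · show sig p (sig p (UE p)) * UK p = UK p * UE p
        rw [sig_E, map_smul, sig_E, smul_smul, uKE', smul_mul_assoc, sq]
      · show sig p (sig p (UF p)) * UK p = UK p * UF p
        rw [sig_F, map_smul, sig_F, smul_smul, uKF', smul_mul_assoc,
          ← mul_inv, sq]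
      · show sig p (sig p (UK p)) * UK p = UK p * UK p
        rw [sig_K, sig_K]
      · show sig p (sig p (UKinv p)) * UK p = UK p * UKinv p
        rw [sig_Kinv, sig_Kinv, uKinvK, uKKinv]
  | mul a b ha hb =>
      simp only [map_mul]
      rw [mul_assoc, hb, ← mul_assoc, ha, mul_assoc]
  | add a b ha hb => simp only [map_add, add_mul, mul_add, ha, hb]

lemma sig'_sig'_Kinv (x : Uq p) :
    sig' p (sig' p x) * UKinv p = UKinv p * x := by
  obtain ⟨a, rfl⟩ := RingQuot.mkAlgHom_surjective ℂ (URel p) x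
  induction a using FreeAlgebra.induction with
  | grade0 r => simp [AlgHom.commutes, Algebra.commutes]
  | grade1 g =>
      cases g
      · show sig' p (sig' p (UE p)) * UKinv p = UKinv p * UE p
        rw [sig'_E, map_smul, sig'_E, smul_smul, uKinvE, smul_mul_assoc,
          ← mul_inv, sq]
      · show sig' p (sig' p (UF p)) * UKinv p = UKinv p * UF p
        rw [sig'_F, map_smul, sig'_F, smul_smul, uKinvF, smul_mul_assoc, sq]
      · show sig' p (sig' p (UK p)) * UKinv p = UKinv p * UK p
        rw [sig'_K, sig'_K, uKKinv, uKinvK]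
      · show sig' p (sig' p (UKinv p)) * UKinv p = UKinv p * UKinv p
        rw [sig'_Kinv, sig'_Kinv]
  | mul a b ha hb =>
      simp only [map_mul]
      rw [mul_assoc, hb, ← mul_assoc, ha, mul_assoc]
  | add a b ha hb => simp only [map_add, add_mul, mul_add, ha, hb]

end IotaAux

namespace IotaAux
open LogHennings
variable (p : ℕ)

/-! ### The doubled left regular representation -/

def PPlin : Module.End ℂ (Uq p) →ₗ[ℂ] Module.End ℂ (Uq p × Uq p) where
  toFun f := f.prodMap f
  map_add' f g := by
    ext v <;> simp [LinearMap.prodMap_apply]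
  map_smul' c f := by
    ext v <;> simp [LinearMap.prodMap_apply]

def PP : Module.End ℂ (Uq p) →ₐ[ℂ] Module.End ℂ (Uq p × Uq p) :=
  AlgHom.ofLinearMap (PPlin p)
    (by simp only [PPlin, LinearMap.coe_mk, AddHom.coe_mk, Module.End.one_eq_id,
          LinearMap.prodMap_id])
    (fun f g => by
      simp only [PPlin, LinearMap.coe_mk, AddHom.coe_mk, Module.End.mul_eq_comp,
        LinearMap.prodMap_comp])

def Lam : Uq p →ₐ[ℂ] Module.End ℂ (Uq p × Uq p) :=
  (PP p).comp (Algebra.lmul ℂ (Uq p))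

@[simp] lemma Lam_apply (x : Uq p) (v : Uq p × Uq p) :
    Lam p x v = (x * v.1, x * v.2) := by
  simp [Lam, PP, PPlin, AlgHom.ofLinearMap, LinearMap.prodMap_apply]

/-! ### The action of `k` -/

def khat : Module.End ℂ (Uq p × Uq p) :=
  LinearMap.prod
    ((LinearMap.mulRight ℂ (UK p)).comp
      ((sig p).toLinearMap.comp (LinearMap.snd ℂ (Uq p) (Uq p))))
    ((sig p).toLinearMap.comp (LinearMap.fst ℂ (Uq p) (Uq p)))

def khinv : Module.End ℂ (Uq p × Uq p) :=
  LinearMap.prod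
    ((sig' p).toLinearMap.comp (LinearMap.snd ℂ (Uq p) (Uq p)))
    ((LinearMap.mulRight ℂ (UKinv p)).comp
      ((sig' p).toLinearMap.comp (LinearMap.fst ℂ (Uq p) (Uq p))))

@[simp] lemma khat_apply (v : Uq p × Uq p) :
    khat p v = (sig p v.2 * UK p, sig p v.1) := rfl

@[simp] lemma khinv_apply (v : Uq p × Uq p) :
    khinv p v = (sig' p v.2, sig' p v.1 * UKinv p) := rfl

lemma endext {f g : Module.End ℂ (Uq p × Uq p)}
    (h : ∀ x y : Uq p, f (x, y) = g (x, y)) : f = g :=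
  LinearMap.ext fun v => by obtain ⟨x, y⟩ := v; exact h x y

lemma khat_khinv : khat p * khinv p = 1 := by
  apply endext
  intro x y
  simp [Module.End.mul_apply, Module.End.one_apply, map_mul, sig_sig',
    mul_assoc, uKinvK]

lemma khinv_khat : khinv p * khat p = 1 := by
  apply endext
  intro x y
  simp [Module.End.mul_apply, Module.End.one_apply, map_mul, sig'_sig,
    mul_assoc, uKKinv]

lemma khat_sq : khat p ^ 2 = Lam p (UK p) := by
  rw [sq]
  apply endext
  intro x y
  simp [Module.End.mul_apply, map_mul, sig_sig_K]

lemma khinv_sq : khinv p ^ 2 = Lam p (UKinv p) := by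
  rw [sq]
  apply endext
  intro x y
  simp [Module.End.mul_apply, map_mul, sig'_sig'_Kinv]

/-! ### The representation `ρ` of `Dq` -/

def rhoF : FD →ₐ[ℂ] Module.End ℂ (Uq p × Uq p) :=
  FreeAlgebra.lift ℂ (fun g => match g with
    | DGen.e => Lam p (UE p)
    | DGen.phi => Lam p (UF p)
    | DGen.k => khat p
    | DGen.kinv => khinv p)

@[simp] lemma rhoF_e : rhoF p fe = Lam p (UE p) := by simp [rhoF, fe]
@[simp] lemma rhoF_phi : rhoF p fphi = Lam p (UF p) := by simp [rhoF, fphi]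
@[simp] lemma rhoF_k : rhoF p fk = khat p := by simp [rhoF, fk]
@[simp] lemma rhoF_kinv : rhoF p fkinv = khinv p := by simp [rhoF, fkinv]

lemma rhoF_rel : ∀ ⦃a b : FD⦄, DRel p a b → rhoF p a = rhoF p b := by
  intro a b h
  induction h with
  | epow => simp [map_pow, ← map_pow (Lam p), uEp]
  | phipow => simp [map_pow, ← map_pow (Lam p), uFp]
  | kpow =>
      simp only [map_pow, map_one, rhoF_k]
      rw [show 4 * p = 2 * (2 * p) by ring, pow_mul, khat_sq,
        ← map_pow (Lam p), uK2p, map_one]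
  | kkinv => simp [map_mul, map_one, khat_khinv]
  | kinvk => simp [map_mul, map_one, khinv_khat]
  | ke =>
      simp only [map_mul, map_smul, rhoF_k, rhoF_e, rhoF_kinv]
      apply endext
      intro x y
      simp [Module.End.mul_apply, LinearMap.smul_apply, Prod.smul_mk,
        map_mul, sig_E, sig_Kinv, sig_sig', smul_mul_assoc, mul_assoc,
        uKinvK]
  | kphi =>
      simp only [map_mul, map_smul, rhoF_k, rhoF_phi, rhoF_kinv]
      apply endext
      intro x y
      simp [Module.End.mul_apply, LinearMap.smul_apply, Prod.smul_mk,
        map_mul, sig_F, sig_Kinv, sig_sig', smul_mul_assoc, mul_assoc,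
        uKinvK]
  | ephi =>
      simp only [map_mul, map_sub, map_smul, map_pow, rhoF_e, rhoF_phi,
        rhoF_k, rhoF_kinv, khat_sq, khinv_sq]
      rw [← map_mul, ← map_mul, ← map_sub, ← map_sub, ← map_smul, uEF]

def rho : Dq p →ₐ[ℂ] Module.End ℂ (Uq p × Uq p) :=
  RingQuot.liftAlgHom ℂ ⟨rhoF p, rhoF_rel p⟩

@[simp] lemma rho_e : rho p (De p) = Lam p (UE p) := by
  rw [De, rho, RingQuot.liftAlgHom_mkAlgHom_apply]; simp
@[simp] lemma rho_phi : rho p (Dphi p) = Lam p (UF p) := by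
  rw [Dphi, rho, RingQuot.liftAlgHom_mkAlgHom_apply]; simp
@[simp] lemma rho_k : rho p (Dk p) = khat p := by
  rw [Dk, rho, RingQuot.liftAlgHom_mkAlgHom_apply]; simp
@[simp] lemma rho_kinv : rho p (Dkinv p) = khinv p := by
  rw [Dkinv, rho, RingQuot.liftAlgHom_mkAlgHom_apply]; simp

lemma rho_iota : (rho p).comp (iota p) = Lam p := by
  apply Uq_algHom_ext <;>
    simp [map_pow, khat_sq, khinv_sq]

lemma iota_injective : Function.Injective (iota p) := by
  intro x y h
  have h2 : Lam p x = Lam p y := by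
    rw [← rho_iota]
    simp only [AlgHom.comp_apply, h]
  have h3 := congrArg (fun f : Module.End ℂ (Uq p × Uq p) =>
    (f ((1 : Uq p), (0 : Uq p))).1) h2
  simpa using h3

end IotaAux

namespace IotaAux
open LogHennings
variable (p : ℕ)

lemma tmap_eq (z : Uq p ⊗[ℂ] Uq p) :
    TensorProduct.map (iota p).toLinearMap (iota p).toLinearMap z
      = Algebra.TensorProduct.map (iota p) (iota p) z := by
  have h : TensorProduct.map (iota p).toLinearMap (iota p).toLinearMap
      = (Algebra.TensorProduct.map (iota p) (iota p)).toLinearMap := by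
    apply TensorProduct.ext'
    intro a b
    simp [Algebra.TensorProduct.map_tmul]
  rw [h]; rfl

end IotaAux

open LogHennings in
/-- The assignment `E ↦ e`, `F ↦ φ`, `K^{±1} ↦ k^{±2}` extends to an injective
algebra homomorphism `ι : U → D` which is a morphism of Hopf algebras. -/
theorem iota_hopf_embedding (p : ℕ) (hp : 2 ≤ p) :
    ∃ ι : Uq p →ₐ[ℂ] Dq p, IsIota p ι ∧ Function.Injective ι ∧
      (∀ (ΔU : Uq p →ₐ[ℂ] Uq p ⊗[ℂ] Uq p) (ΔD : Dq p →ₐ[ℂ] Dq p ⊗[ℂ] Dq p),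
        IsDeltaU p ΔU → IsDeltaD p ΔD →
        ∀ x, TensorProduct.map ι.toLinearMap ι.toLinearMap (ΔU x) = ΔD (ι x)) ∧
      (∀ (εU : Uq p →ₐ[ℂ] ℂ) (εD : Dq p →ₐ[ℂ] ℂ),
        IsCounitU p εU → IsCounitD p εD → ∀ x, εD (ι x) = εU x) ∧
      (∀ (SU : Uq p →ₗ[ℂ] Uq p) (SD : Dq p →ₗ[ℂ] Dq p),
        IsAntipodeU p SU → IsAntipodeD p SD → ∀ x, ι (SU x) = SD (ι x)) := by
  refine ⟨IotaAux.iota p,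
    ⟨IotaAux.iota_E p, IotaAux.iota_F p, IotaAux.iota_K p, IotaAux.iota_Kinv p⟩,
    IotaAux.iota_injective p, ?_, ?_, ?_⟩
  · intro ΔU ΔD hU hD x
    obtain ⟨hUE, hUF, hUK, hUKinv⟩ := hU
    obtain ⟨hDE, hDF, hDK, hDKinv⟩ := hD
    have key : (Algebra.TensorProduct.map (IotaAux.iota p)
        (IotaAux.iota p)).comp ΔU = ΔD.comp (IotaAux.iota p) := by
      apply IotaAux.Uq_algHom_ext <;>
        simp [hUE, hUF, hUK, hUKinv, hDE, hDF, hDK, hDKinv,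
          Algebra.TensorProduct.map_tmul, map_pow, pow_two,
          Algebra.TensorProduct.tmul_mul_tmul]
    have hx := AlgHom.congr_fun key x
    simp only [AlgHom.comp_apply] at hx
    rw [IotaAux.tmap_eq, hx]
  · intro εU εD hU hD x
    obtain ⟨hUE, hUF, hUK, hUKinv⟩ := hU
    obtain ⟨hDE, hDF, hDK, hDKinv⟩ := hD
    have key : εD.comp (IotaAux.iota p) = εU := by
      apply IotaAux.Uq_algHom_ext <;>
        simp [hUE, hUF, hUK, hUKinv, hDE, hDF, hDK, hDKinv, map_pow]
    have hx := AlgHom.congr_fun key x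
    simpa only [AlgHom.comp_apply] using hx
  · intro SU SD hSU hSD x
    obtain ⟨hSU1, hSUm, hSUE, hSUF, hSUK, hSUKinv⟩ := hSU
    obtain ⟨hSD1, hSDm, hSDE, hSDF, hSDK, hSDKinv⟩ := hSD
    obtain ⟨a, rfl⟩ := RingQuot.mkAlgHom_surjective ℂ (URel p) x
    induction a using FreeAlgebra.induction with
    | grade0 r =>
        have h1 : (RingQuot.mkAlgHom ℂ (URel p)) (algebraMap ℂ FU r)
            = r • (1 : Uq p) := by
          rw [AlgHom.commutes, Algebra.algebraMap_eq_smul_one]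
        simp [h1, hSU1, hSD1]
    | grade1 g =>
        cases g
        · show IotaAux.iota p (SU (UE p)) = SD (IotaAux.iota p (UE p))
          rw [hSUE, IotaAux.iota_E, hSDE, map_neg, map_mul, IotaAux.iota_E,
            IotaAux.iota_Kinv]
        · show IotaAux.iota p (SU (UF p)) = SD (IotaAux.iota p (UF p))
          rw [hSUF, IotaAux.iota_F, hSDF, map_neg, map_mul, IotaAux.iota_K,
            IotaAux.iota_F]
        · show IotaAux.iota p (SU (UK p)) = SD (IotaAux.iota p (UK p))
          rw [hSUK, IotaAux.iota_Kinv, IotaAux.iota_K, sq (Dk p), hSDm, hSDK, ← sq]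
        · show IotaAux.iota p (SU (UKinv p)) = SD (IotaAux.iota p (UKinv p))
          rw [hSUKinv, IotaAux.iota_K, IotaAux.iota_Kinv, sq (Dkinv p), hSDm,
            hSDKinv, ← sq]
    | mul a b ha hb =>
        rw [map_mul, hSUm, map_mul, ha, hb, ← hSDm, ← map_mul]
    | add a b ha hb => simp only [map_add, ha, hb]
end
end

section
/- Both the Drinfeld element u = Σ_i S(β_i)α_i (for R = Σ_i α_i ⊗ β_i) and the ribbon element r lie in the image ι(U) of the embedding ι : U → D given by E ↦ e, F ↦ φ, K ↦ k². -/
open scoped TensorProduct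
open Finset

noncomputable section

namespace LogHennings

variable {A : Type*} [Ring A] [Algebra ℂ A]

variable (p : ℕ)

lemma qq_ne_zero : qq p ≠ 0 := Complex.exp_ne_zero _
lemma qh_ne_zero : qh p ≠ 0 := Complex.exp_ne_zero _

lemma qh_pow_two_mul (hpne : p ≠ 0) : qh p ^ (2 * p) = -1 := by
  rw [qh, ← Complex.exp_nat_mul]
  rw [show ((2 * p : ℕ) : ℂ) * ((Real.pi : ℂ) * Complex.I / (2 * (p : ℂ)))
      = (Real.pi : ℂ) * Complex.I by
    have hp : (p : ℂ) ≠ 0 := Nat.cast_ne_zero.mpr hpne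
    push_cast
    field_simp]
  exact Complex.exp_pi_mul_I

lemma qh_zpow_shift (hpne : p ≠ 0) {s t d : ℤ} (h : s = t + 2 * (p : ℤ) * d)
    (hd : Odd d) : qh p ^ s = -(qh p ^ t) := by
  subst h
  rw [zpow_add₀ (qh_ne_zero p)]
  have h2 : qh p ^ (2 * (p : ℤ) * d) = -1 := by
    rw [zpow_mul, show (2 * (p : ℤ)) = ((2 * p : ℕ) : ℤ) by push_cast; ring,
      zpow_natCast, qh_pow_two_mul p hpne]
    exact hd.neg_one_zpow
  rw [h2, mul_neg_one]

lemma Dq_rel {a b : FD} (h : DRel p a b) :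
    RingQuot.mkAlgHom ℂ (DRel p) a = RingQuot.mkAlgHom ℂ (DRel p) b :=
  RingQuot.mkAlgHom_rel ℂ h

lemma Dk_pow_4p : Dk p ^ (4 * p) = 1 := by
  have h := Dq_rel p (DRel.kpow (p := p))
  simpa [Dk, map_pow, map_one] using h

lemma Dk_pow_period (a c : ℕ) : Dk p ^ (a + 4 * p * c) = Dk p ^ a := by
  rw [pow_add, pow_mul, Dk_pow_4p, one_pow, mul_one]

lemma Dk_mul_Dkinv : Dk p * Dkinv p = 1 := by
  have h := Dq_rel p (DRel.kkinv (p := p))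
  simpa [Dk, Dkinv, map_mul, map_one] using h

lemma Dkinv_mul_Dk : Dkinv p * Dk p = 1 := by
  have h := Dq_rel p (DRel.kinvk (p := p))
  simpa [Dk, Dkinv, map_mul, map_one] using h

lemma Dk_mul_De : Dk p * De p = qq p • (De p * Dk p) := by
  have h := Dq_rel p (DRel.ke (p := p))
  rw [fk, fe, fkinv] at h
  simp only [map_mul, map_smul] at h
  rw [← fk, ← fe, ← fkinv, ← Dk, ← De, ← Dkinv] at h
  calc Dk p * De p = Dk p * De p * (Dkinv p * Dk p) := by
        rw [Dkinv_mul_Dk, mul_one]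
    _ = (Dk p * De p * Dkinv p) * Dk p := by rw [← mul_assoc]
    _ = (qq p • De p) * Dk p := by rw [h]
    _ = qq p • (De p * Dk p) := smul_mul_assoc _ _ _

lemma Dk_mul_Dphi : Dk p * Dphi p = (qq p)⁻¹ • (Dphi p * Dk p) := by
  have h := Dq_rel p (DRel.kphi (p := p))
  rw [fk, fphi, fkinv] at h
  simp only [map_mul, map_smul] at h
  rw [← fk, ← fphi, ← fkinv, ← Dk, ← Dphi, ← Dkinv] at h
  calc Dk p * Dphi p = Dk p * Dphi p * (Dkinv p * Dk p) := by
        rw [Dkinv_mul_Dk, mul_one]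
    _ = (Dk p * Dphi p * Dkinv p) * Dk p := by rw [← mul_assoc]
    _ = ((qq p)⁻¹ • Dphi p) * Dk p := by rw [h]
    _ = (qq p)⁻¹ • (Dphi p * Dk p) := smul_mul_assoc _ _ _

lemma comm_pow {a x : Dq p} {c : ℂ} (h : a * x = c • (x * a)) (m : ℕ) :
    a * x ^ m = c ^ m • (x ^ m * a) := by
  induction m with
  | zero => simp
  | succ m ih =>
    rw [pow_succ', ← mul_assoc, h, smul_mul_assoc, mul_assoc, ih, mul_smul_comm,
      smul_smul, ← pow_succ', ← mul_assoc, ← pow_succ']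

lemma neg_helper {R : Type} [Ring R] [Algebra ℂ R] (a b : R) (c : ℂ)
    (h : a * b = c • (b * a)) : a * -b = c • (-b * a) := by
  rw [mul_neg, h, neg_mul, smul_neg]

lemma Dk_mul_negY :
    Dk p * (-(Dk p ^ 2 * Dphi p)) = (qq p)⁻¹ • (-(Dk p ^ 2 * Dphi p) * Dk p) := by
  have h : Dk p * (Dk p ^ 2 * Dphi p) = (qq p)⁻¹ • (Dk p ^ 2 * Dphi p * Dk p) := by
    calc Dk p * (Dk p ^ 2 * Dphi p) = (Dk p * Dk p ^ 2) * Dphi p := by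
          rw [mul_assoc]
      _ = (Dk p ^ 2 * Dk p) * Dphi p := by
          rw [← pow_succ', pow_succ]
      _ = Dk p ^ 2 * (Dk p * Dphi p) := by rw [mul_assoc]
      _ = Dk p ^ 2 * ((qq p)⁻¹ • (Dphi p * Dk p)) := by rw [Dk_mul_Dphi]
      _ = (qq p)⁻¹ • (Dk p ^ 2 * Dphi p * Dk p) := by
          rw [mul_smul_comm, mul_assoc]
  exact neg_helper _ _ _ h

/-- The element `X_m = (-(k² φ))^m e^m`. -/
def Xel (m : ℕ) : Dq p := (-(Dk p ^ 2 * Dphi p)) ^ m * De p ^ m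

lemma Dk_commute_X (m : ℕ) : Dk p * Xel p m = Xel p m * Dk p := by
  have h1 := comm_pow p (Dk_mul_negY p) m
  have h2 := comm_pow p (Dk_mul_De p) m
  calc Dk p * Xel p m
      = (Dk p * (-(Dk p ^ 2 * Dphi p)) ^ m) * De p ^ m := by
        rw [Xel, mul_assoc]
    _ = ((qq p)⁻¹ ^ m • ((-(Dk p ^ 2 * Dphi p)) ^ m * Dk p)) * De p ^ m := by rw [h1]
    _ = (qq p)⁻¹ ^ m • ((-(Dk p ^ 2 * Dphi p)) ^ m * (Dk p * De p ^ m)) := by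
        rw [smul_mul_assoc, mul_assoc]
    _ = (qq p)⁻¹ ^ m •
        ((-(Dk p ^ 2 * Dphi p)) ^ m * (qq p ^ m • (De p ^ m * Dk p))) := by rw [h2]
    _ = ((qq p)⁻¹ ^ m * qq p ^ m) •
        ((-(Dk p ^ 2 * Dphi p)) ^ m * (De p ^ m * Dk p)) := by
        rw [mul_smul_comm, smul_smul]
    _ = Xel p m * Dk p := by
        rw [inv_pow, inv_mul_cancel₀ (pow_ne_zero m (qq_ne_zero p)), one_smul,
          Xel, mul_assoc]

lemma Dk_pow_commute_X (a m : ℕ) : Dk p ^ a * Xel p m = Xel p m * Dk p ^ a := by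
  have hc : Commute (Dk p) (Xel p m) := Dk_commute_X p m
  exact (hc.pow_left a).eq

lemma Dkinv_eq (hp0 : 0 < p) : Dkinv p = Dk p ^ (4 * p - 1) := by
  have h2 : 4 * p = (4 * p - 1) + 1 := by omega
  calc Dkinv p = Dkinv p * Dk p ^ (4 * p) := by rw [Dk_pow_4p, mul_one]
    _ = Dkinv p * (Dk p * Dk p ^ (4 * p - 1)) := by
        conv_lhs => rw [h2, pow_succ']
    _ = (Dkinv p * Dk p) * Dk p ^ (4 * p - 1) := by rw [mul_assoc]
    _ = Dk p ^ (4 * p - 1) := by rw [Dkinv_mul_Dk, one_mul]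

lemma S_pow {S : Dq p →ₗ[ℂ] Dq p} (hS : IsAntipodeD p S) (x : Dq p) (m : ℕ) :
    S (x ^ m) = (S x) ^ m := by
  induction m with
  | zero => rw [pow_zero, pow_zero, hS.1]
  | succ m ih => rw [pow_succ, hS.2.1 _ _, ih, ← pow_succ']

lemma term_eq (hp0 : 0 < p) {S : Dq p →ₗ[ℂ] Dq p} (hS : IsAntipodeD p S)
    (m n j : ℕ) :
    S (Dphi p ^ m * Dk p ^ j) * (De p ^ m * Dk p ^ n) =
      Xel p m * Dk p ^ ((4 * p - 1) * j + n) := by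
  rw [hS.2.1 _ _, S_pow p hS, S_pow p hS, hS.2.2.2.2.1, hS.2.2.2.1,
    Dkinv_eq p hp0, ← pow_mul]
  have h := Dk_pow_commute_X p ((4 * p - 1) * j) m
  calc Dk p ^ ((4 * p - 1) * j) * (-(Dk p ^ 2 * Dphi p)) ^ m *
        (De p ^ m * Dk p ^ n)
      = (Dk p ^ ((4 * p - 1) * j) * Xel p m) * Dk p ^ n := by
        rw [Xel]; simp only [mul_assoc]
    _ = (Xel p m * Dk p ^ ((4 * p - 1) * j)) * Dk p ^ n := by rw [h]
    _ = Xel p m * Dk p ^ ((4 * p - 1) * j + n) := by rw [mul_assoc, ← pow_add]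

/-- Coefficients of the `R`-matrix. -/
def wcoef (m n j : ℕ) : ℂ :=
  ((qq p - (qq p)⁻¹) ^ m / qfac p m) *
    (qh p) ^ ((m : ℤ) * ((m : ℤ) - 1) + 2 * (m : ℤ) * ((n : ℤ) - (j : ℤ))
      - (n : ℤ) * (j : ℤ))

/-- Summands of the Drinfeld element. -/
def uterm (m n j : ℕ) : Dq p :=
  wcoef p m n j • (Xel p m * Dk p ^ ((4 * p - 1) * j + n))

lemma drinfeldU_eq (S : Dq p →ₗ[ℂ] Dq p) :
    drinfeldU p S = (4 * (p : ℂ))⁻¹ •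
      ∑ m ∈ range p, ∑ n ∈ range (4 * p), ∑ j ∈ range (4 * p),
        (((qq p - (qq p)⁻¹) ^ m / qfac p m) *
            (qh p) ^ ((m : ℤ) * ((m : ℤ) - 1) + 2 * (m : ℤ) * ((n : ℤ) - (j : ℤ))
              - (n : ℤ) * (j : ℤ))) •
          (S (Dphi p ^ m * Dk p ^ j) * (De p ^ m * Dk p ^ n)) := by
  unfold drinfeldU R21 Rmat
  simp only [map_smul, map_sum, TensorProduct.comm_tmul, TensorProduct.map_tmul,
    LinearMap.mul'_apply, LinearMap.id_coe, id_eq]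

lemma drinfeldU_eq' (hp0 : 0 < p) {S : Dq p →ₗ[ℂ] Dq p} (hS : IsAntipodeD p S) :
    drinfeldU p S = (4 * (p : ℂ))⁻¹ •
      ∑ m ∈ range p, ∑ n ∈ range (4 * p), ∑ j ∈ range (4 * p), uterm p m n j := by
  rw [drinfeldU_eq p S]
  congr 1
  refine sum_congr rfl fun m _ => sum_congr rfl fun n _ => sum_congr rfl fun j _ => ?_
  rw [uterm, wcoef, term_eq p hp0 hS]

lemma sum_range_split {M : Type*} [AddCommMonoid M] (f : ℕ → M) :
    ∑ i ∈ range (4 * p), f i = ∑ i ∈ range (2 * p), (f i + f (i + 2 * p)) := by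
  rw [show 4 * p = 2 * p + 2 * p by ring, Finset.sum_range_add,
    ← Finset.sum_add_distrib]
  exact Finset.sum_congr rfl fun i _ => by rw [Nat.add_comm (2 * p) i]

lemma block_mem (hp0 : 0 < p) {A : Subalgebra ℂ (Dq p)}
    (hX : ∀ m, Xel p m ∈ A) (hDkE : ∀ E : ℕ, Even E → Dk p ^ E ∈ A)
    (m n j : ℕ) :
    (uterm p m n j + uterm p m n (j + 2 * p)) +
      (uterm p m (n + 2 * p) j + uterm p m (n + 2 * p) (j + 2 * p)) ∈ A := by
  have hpne : p ≠ 0 := by omega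
  rcases Nat.even_or_odd (n + j) with hpar | hpar
  · -- all four exponents are even
    have hQ : Odd (4 * p - 1) := ⟨2 * p - 1, by omega⟩
    have hE : ∀ n' j' : ℕ, Even (n' + j') → Even ((4 * p - 1) * j' + n') := by
      intro n' j' h
      rcases Nat.even_or_odd j' with hj | hj
      · exact (hj.mul_left _).add ((Nat.even_add.mp h).mpr hj)
      · refine (hQ.mul hj).add_odd ?_
        rcases Nat.even_or_odd n' with hn | hn
        · exact absurd ((Nat.even_add.mp h).mp hn) (by
            simpa [Nat.even_iff, Nat.odd_iff.mp hj] using (by omega : ¬ j' % 2 = 0))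
        · exact hn
    obtain ⟨t, ht⟩ := hpar
    have h1 := hE n j ⟨t, by omega⟩
    have h2 := hE n (j + 2 * p) ⟨t + p, by omega⟩
    have h3 := hE (n + 2 * p) j ⟨t + p, by omega⟩
    have h4 := hE (n + 2 * p) (j + 2 * p) ⟨t + 2 * p, by omega⟩
    simp only [uterm]
    exact add_mem
      (add_mem (Subalgebra.smul_mem _ (mul_mem (hX m) (hDkE _ h1)) _)
        (Subalgebra.smul_mem _ (mul_mem (hX m) (hDkE _ h2)) _))
      (add_mem (Subalgebra.smul_mem _ (mul_mem (hX m) (hDkE _ h3)) _)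
        (Subalgebra.smul_mem _ (mul_mem (hX m) (hDkE _ h4)) _))
  · -- the four terms cancel in pairs
    have hnj := Nat.odd_iff.mp hpar
    have hz1 : uterm p m n j + uterm p m (n + 2 * p) (j + 2 * p) = 0 := by
      have he : (4 * p - 1) * (j + 2 * p) + (n + 2 * p)
          = ((4 * p - 1) * j + n) + 4 * p * (2 * p) := by
        zify [show 1 ≤ 4 * p by omega]; ring
      have hw : wcoef p m (n + 2 * p) (j + 2 * p) = -wcoef p m n j := by
        unfold wcoef
        rw [qh_zpow_shift p hpne (d := -((n : ℤ) + (j : ℤ)) - 2 * (p : ℤ))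
          (t := (m : ℤ) * ((m : ℤ) - 1) + 2 * (m : ℤ) * ((n : ℤ) - (j : ℤ))
            - (n : ℤ) * (j : ℤ))
          (by push_cast; ring) (by rw [Int.odd_iff]; omega)]
        ring
      rw [uterm, uterm, he, Dk_pow_period, hw, ← add_smul]
      simp
    have hz2 : uterm p m n (j + 2 * p) + uterm p m (n + 2 * p) j = 0 := by
      have he : (4 * p - 1) * (j + 2 * p) + n
          = ((4 * p - 1) * j + (n + 2 * p)) + 4 * p * (2 * p - 1) := by
        zify [show 1 ≤ 4 * p by omega, show 1 ≤ 2 * p by omega]; ring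
      have hw : wcoef p m n (j + 2 * p) = -wcoef p m (n + 2 * p) j := by
        unfold wcoef
        rw [qh_zpow_shift p hpne (d := (j : ℤ) - (n : ℤ) - 4 * (m : ℤ))
          (t := (m : ℤ) * ((m : ℤ) - 1)
            + 2 * (m : ℤ) * (((n : ℤ) + 2 * (p : ℤ)) - (j : ℤ))
            - ((n : ℤ) + 2 * (p : ℤ)) * (j : ℤ))
          (by push_cast; ring) (by rw [Int.odd_iff]; omega)]
        push_cast
        ring
      rw [uterm, uterm, he, Dk_pow_period, hw, ← add_smul]
      simp
    have hre : (uterm p m n j + uterm p m n (j + 2 * p)) +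
        (uterm p m (n + 2 * p) j + uterm p m (n + 2 * p) (j + 2 * p))
        = (uterm p m n j + uterm p m (n + 2 * p) (j + 2 * p)) +
          (uterm p m n (j + 2 * p) + uterm p m (n + 2 * p) j) := by abel
    rw [hre, hz1, hz2, add_zero]
    exact zero_mem A

end LogHennings
open LogHennings in
/-- Both the Drinfeld element `u` and the ribbon element `r` lie in the image
of the embedding `ι : U → D`. -/
theorem u_and_r_in_image_of_iota (p : ℕ) (hp : 2 ≤ p) :
    ∀ (S : Dq p →ₗ[ℂ] Dq p) (ι : Uq p →ₐ[ℂ] Dq p),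
      IsAntipodeD p S → IsIota p ι →
      drinfeldU p S ∈ Set.range ι ∧ rib p ∈ Set.range ι := by
  intro S ι hS hι
  have hp0 : 0 < p := by omega
  have hDe : De p ∈ ι.range := ⟨UE p, hι.1⟩
  have hDphi : Dphi p ∈ ι.range := ⟨UF p, hι.2.1⟩
  have hDk2 : Dk p ^ 2 ∈ ι.range := ⟨UK p, hι.2.2.1⟩
  have hX : ∀ m, Xel p m ∈ ι.range := fun m =>
    mul_mem (pow_mem (neg_mem (mul_mem hDk2 hDphi)) m) (pow_mem hDe m)
  have hDkE : ∀ E : ℕ, Even E → Dk p ^ E ∈ ι.range := by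
    intro E hE
    obtain ⟨t, rfl⟩ := hE
    rw [show t + t = 2 * t by ring, pow_mul]
    exact pow_mem hDk2 t
  constructor
  · have hu : drinfeldU p S ∈ ι.range := by
      rw [drinfeldU_eq' p hp0 hS]
      refine Subalgebra.smul_mem _ (sum_mem fun m _ => ?_) _
      rw [sum_range_split]
      refine sum_mem fun n _ => ?_
      rw [sum_range_split p (fun j => uterm p m n j),
        sum_range_split p (fun j => uterm p m (n + 2 * p) j),
        ← Finset.sum_add_distrib]
      exact sum_mem fun j _ => block_mem p hp0 hX hDkE m n j
    obtain ⟨x, hx⟩ := hu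
    exact ⟨x, hx⟩
  · have hr : rib p ∈ ι.range := by
      rw [rib]
      refine Subalgebra.smul_mem _ (sum_mem fun m _ => sum_mem fun j _ =>
        Subalgebra.smul_mem _ ?_ _) _
      rw [pow_mul]
      exact mul_mem (mul_mem (pow_mem hDphi m) (pow_mem hDe m)) (pow_mem hDk2 j)
    obtain ⟨x, hx⟩ := hr
    exact ⟨x, hx⟩
end
end

section
/- The Hopf algebra D is not factorizable: the ℂ-linear map from the dual space D* to D sending f to (f ⊗ id)(R₂₁R) is not bijective, where R₂₁ = τ(R) with τ the flip of tensor factors. -/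
/-!
Evaluating a character `χ` of `D` on `(f ⊗ id)(M)` gives `f((id ⊗ χ)(M))`. Hence if two
distinct characters `χ ≠ χ'` have the same slice `(id ⊗ χ)(M) = (id ⊗ χ')(M)`, they agree on
the whole image of `f ↦ (f ⊗ id)(M)`, which therefore is not all of `D`.

The characters `e, φ ↦ 0`, `k ↦ ±i` do this. Killing `φ` (resp. `e`) leaves only the Cartan
part `(4p)⁻¹ Σ q^{-nj/2} k^n ⊗ k^j` of `R` (resp. `R₂₁`), a discrete Fourier kernel: its slice
by `k ↦ q^{s/2}` is `k^s`. With `i = q^{p/2}` and `-i = q^{3p/2}` the slices of `M = R₂₁R` are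
`k^{2p}` and `k^{6p} = k^{2p}`.
-/

open scoped TensorProduct
open Finset

noncomputable section

section Slice

variable {R A : Type*} [CommSemiring R] [Semiring A] [Algebra R A]

def sliceRight (χ : A →ₐ[R] R) : A ⊗[R] A →ₐ[R] A :=
  (Algebra.TensorProduct.rid R R A).toAlgHom.comp (Algebra.TensorProduct.map (AlgHom.id R A) χ)

@[simp] lemma sliceRight_tmul (χ : A →ₐ[R] R) (a b : A) :
    sliceRight χ (a ⊗ₜ b) = χ b • a := by
  simp [sliceRight]

lemma apply_lid_map_eq_apply_sliceRight (χ : A →ₐ[R] R) (f : Module.Dual R A)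
    (x : A ⊗[R] A) :
    χ (TensorProduct.lid R A (TensorProduct.map f LinearMap.id x)) = f (sliceRight χ x) := by
  induction x with
  | zero => simp
  | tmul a b => simp [mul_comm]
  | add x y hx hy => simp [hx, hy]

theorem not_surjective_of_sliceRight_eq {χ χ' : A →ₐ[R] R} (hne : χ ≠ χ') {M : A ⊗[R] A}
    (hM : sliceRight χ M = sliceRight χ' M) :
    ¬ Function.Surjective (fun f : Module.Dual R A =>
        TensorProduct.lid R A (TensorProduct.map f LinearMap.id M)) := by
  intro hsurj
  obtain ⟨a, ha⟩ : ∃ a, χ a ≠ χ' a := by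
    by_contra! h
    exact hne (AlgHom.ext h)
  obtain ⟨f, rfl⟩ := hsurj a
  exact ha (by simp only [apply_lid_map_eq_apply_sliceRight, hM])

end Slice

section RootsOfUnity

variable {K : Type*} [Field K] {ζ : K} {N : ℕ}

theorem IsPrimitiveRoot.geom_sum_zpow (hζ : IsPrimitiveRoot ζ N) (a : ℤ) :
    ∑ j ∈ range N, (ζ ^ a) ^ j = if (N : ℤ) ∣ a then (N : K) else 0 := by
  split_ifs with ha
  · simp [(hζ.zpow_eq_one_iff_dvd a).2 ha]
  · have hne : ζ ^ a ≠ 1 := fun h => ha ((hζ.zpow_eq_one_iff_dvd a).1 h)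
    have hpow : (ζ ^ a) ^ N = 1 := by
      rw [← zpow_natCast, ← zpow_mul, mul_comm, zpow_mul, zpow_natCast, hζ.pow_eq_one,
        one_zpow]
    rw [geom_sum_eq hne, hpow, sub_self, zero_div]

theorem IsPrimitiveRoot.sum_sum_zpow_neg_mul_smul {M : Type*} [AddCommGroup M] [Module K M]
    (hζ : IsPrimitiveRoot ζ N) {s : ℕ} (hs : s < N) (v : ℕ → M) :
    ∑ n ∈ range N, ∑ j ∈ range N, (ζ ^ (-((n : ℤ) * j)) * (ζ ^ s) ^ j) • v n =
      (N : K) • v s := by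
  have hζ0 : ζ ≠ 0 := hζ.ne_zero (by omega)
  have hcoeff (n j : ℕ) :
      ζ ^ (-((n : ℤ) * j)) * (ζ ^ s) ^ j = (ζ ^ ((s : ℤ) - n)) ^ j := by
    rw [← zpow_natCast (ζ ^ s), ← zpow_natCast ζ, ← zpow_mul, ← zpow_natCast (ζ ^ _),
      ← zpow_mul, ← zpow_add₀ hζ0]
    congr 1
    ring
  simp_rw [hcoeff, ← sum_smul, hζ.geom_sum_zpow]
  rw [sum_eq_single_of_mem s (mem_range.2 hs)]
  · simp
  · intro n hn hne
    rw [if_neg, zero_smul]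
    intro hdvd
    have := Int.eq_zero_of_abs_lt_dvd hdvd (by rw [abs_lt]; have := mem_range.1 hn; omega)
    omega

end RootsOfUnity

namespace LogHennings

lemma qh_isPrimitiveRoot {p : ℕ} (hp : p ≠ 0) : IsPrimitiveRoot (qh p) (4 * p) := by
  convert Complex.isPrimitiveRoot_exp (4 * p) (by omega) using 2
  rw [qh]
  congr 1
  push_cast
  field_simp
  ring

lemma qh_pow_self {p : ℕ} (hp : p ≠ 0) : qh p ^ p = Complex.I := by
  rw [qh, ← Complex.exp_nat_mul]
  convert Complex.exp_pi_div_two_mul_I using 2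
  field_simp

lemma Dk_pow_four_mul (p : ℕ) : Dk p ^ (4 * p) = 1 := by
  rw [Dk, ← map_pow, RingQuot.mkAlgHom_rel ℂ DRel.kpow, map_one]

def DcharGen (ζ : ℂ) : DGen → ℂ
  | .e => 0
  | .phi => 0
  | .k => ζ
  | .kinv => ζ⁻¹

/-- The relation for `eφ - φe` is what forces `ζ⁴ = 1`, i.e. `ζ² = ζ⁻²`. -/
def Dchar (p : ℕ) (hp : p ≠ 0) (ζ : ℂ) (hζ : ζ ^ 4 = 1) : Dq p →ₐ[ℂ] ℂ :=
  RingQuot.liftAlgHom ℂ ⟨FreeAlgebra.lift ℂ (DcharGen ζ), fun x y h => by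
    have hζ0 : ζ ≠ 0 := by rintro rfl; norm_num at hζ
    induction h with
    | epow => simp [fe, DcharGen, zero_pow hp]
    | phipow => simp [fphi, DcharGen, zero_pow hp]
    | kpow => simp [fk, DcharGen, pow_mul, hζ]
    | kkinv => simp [fk, fkinv, DcharGen, hζ0]
    | kinvk => simp [fk, fkinv, DcharGen, hζ0]
    | ke => simp [fk, fe, fkinv, DcharGen]
    | kphi => simp [fk, fphi, fkinv, DcharGen]
    | ephi =>
      have hsq : ζ⁻¹ ^ 2 = ζ ^ 2 := by
        rw [inv_pow]
        exact inv_eq_of_mul_eq_one_right (by rw [← pow_add, hζ])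
      simp [fe, fphi, fk, fkinv, DcharGen, hsq]⟩

section Dchar

variable {p : ℕ} (hp : p ≠ 0) {ζ : ℂ} (hζ : ζ ^ 4 = 1)

@[simp] lemma Dchar_De : Dchar p hp ζ hζ (De p) = 0 := by
  simp [Dchar, De, fe, DcharGen]

@[simp] lemma Dchar_Dphi : Dchar p hp ζ hζ (Dphi p) = 0 := by
  simp [Dchar, Dphi, fphi, DcharGen]

@[simp] lemma Dchar_Dk : Dchar p hp ζ hζ (Dk p) = ζ := by
  simp [Dchar, Dk, fk, DcharGen]

end Dchar

section Rmatrix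

variable {p : ℕ} (χ : Dq p →ₐ[ℂ] ℂ) {s : ℕ}

lemma sliceRight_Rmat (hs : s < 4 * p) (hk : χ (Dk p) = qh p ^ s) (hφ : χ (Dphi p) = 0) :
    sliceRight χ (Rmat p) = Dk p ^ s := by
  have hp : p ≠ 0 := by omega
  rw [Rmat, map_smul, map_sum, sum_eq_single_of_mem 0 (mem_range.2 (by omega))]
  · simp only [map_sum, map_smul, sliceRight_tmul, map_pow, hk, pow_zero, one_mul,
      Nat.cast_zero, zero_mul, mul_zero, zero_add, zero_sub, qfac, div_one, smul_smul]
    rw [(qh_isPrimitiveRoot hp).sum_sum_zpow_neg_mul_smul hs, smul_smul]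
    push_cast
    rw [inv_mul_cancel₀ (by simpa using hp), one_smul]
  · intro m _ hm
    simp [hφ, zero_pow hm]

lemma sliceRight_R21 (hs : s < 4 * p) (hk : χ (Dk p) = qh p ^ s) (he : χ (De p) = 0) :
    sliceRight χ (R21 p) = Dk p ^ s := by
  have hp : p ≠ 0 := by omega
  rw [R21, Rmat, map_smul, map_sum, map_smul, map_sum,
    sum_eq_single_of_mem 0 (mem_range.2 (by omega))]
  · simp only [map_sum, map_smul, TensorProduct.comm_tmul, sliceRight_tmul, map_pow, hk,
      pow_zero, one_mul, Nat.cast_zero, zero_mul, mul_zero, zero_add, zero_sub, qfac, div_one,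
      smul_smul]
    rw [sum_comm]
    simp only [mul_comm ((_ : ℕ) : ℤ) ((_ : ℕ) : ℤ)]
    rw [(qh_isPrimitiveRoot hp).sum_sum_zpow_neg_mul_smul hs, smul_smul]
    push_cast
    rw [inv_mul_cancel₀ (by simpa using hp), one_smul]
  · intro m _ hm
    simp [he, zero_pow hm]

lemma sliceRight_Mmat (hs : s < 4 * p) (hk : χ (Dk p) = qh p ^ s) (he : χ (De p) = 0)
    (hφ : χ (Dphi p) = 0) :
    sliceRight χ (Mmat p) = Dk p ^ (2 * s) := by
  rw [Mmat, map_mul, sliceRight_R21 χ hs hk he, sliceRight_Rmat χ hs hk hφ, ← pow_add, two_mul]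

end Rmatrix

end LogHennings

open LogHennings in
/-- `D` is not factorizable: the map `D* → D`, `f ↦ (f ⊗ id)(R₂₁R)`, is not
bijective. -/
theorem D_not_factorizable (p : ℕ) (hp : 2 ≤ p) :
    ¬ Function.Bijective (fun f : Module.Dual ℂ (Dq p) =>
        TensorProduct.lid ℂ (Dq p)
          (TensorProduct.map f LinearMap.id (Mmat p))) := by
  have hp0 : p ≠ 0 := by omega
  let χI := Dchar p hp0 Complex.I Complex.I_pow_four
  let χnegI := Dchar p hp0 (-Complex.I) (by rw [neg_pow, Complex.I_pow_four]; norm_num)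
  have hne : χI ≠ χnegI := fun h => by
    simpa [χI, χnegI, CharZero.eq_neg_self_iff] using congrArg (· (Dk p)) h
  have hMI : sliceRight χI (Mmat p) = Dk p ^ (2 * p) :=
    sliceRight_Mmat χI (by omega) (by simp [χI, qh_pow_self hp0]) (by simp [χI]) (by simp [χI])
  have hMnegI : sliceRight χnegI (Mmat p) = Dk p ^ (2 * p) := by
    rw [sliceRight_Mmat χnegI (s := 3 * p) (by omega)
      (by simp [χnegI, pow_mul', qh_pow_self hp0, pow_succ]) (by simp [χnegI]) (by simp [χnegI]),
      show 2 * (3 * p) = 2 * p + 4 * p by ring, pow_add, Dk_pow_four_mul, mul_one]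
  exact fun hbij => not_surjective_of_sliceRight_eq hne (hMI.trans hMnegI.symm) hbij.2
end
end

section
/- The right integral μ of U is a quantum character: μ(x y) = μ(S²(y) x) for all x, y ∈ U. -/
open scoped TensorProduct
open Finset

noncomputable section

namespace LogHennings

variable {A : Type*} [Ring A] [Algebra ℂ A]

section QChar

variable (p : ℕ)

lemma qq_pow_two_p (hp : 2 ≤ p) : qq p ^ (2 * p) = 1 := by
  have hp0 : (p : ℂ) ≠ 0 := by
    exact_mod_cast Nat.cast_ne_zero.mpr (by omega)
  rw [qq, ← Complex.exp_nat_mul]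
  rw [show ((2 * p : ℕ) : ℂ) * ((Real.pi : ℂ) * Complex.I / (p : ℂ))
      = 2 * (Real.pi : ℂ) * Complex.I by
    push_cast; field_simp]
  exact Complex.exp_two_pi_mul_I

lemma UK_mul_UKinv : UK p * UKinv p = 1 := by
  rw [UK, UKinv, ← map_mul]
  exact (RingQuot.mkAlgHom_rel ℂ URel.KKinv).trans (map_one _)

lemma UKinv_mul_UK : UKinv p * UK p = 1 := by
  rw [UK, UKinv, ← map_mul]
  exact (RingQuot.mkAlgHom_rel ℂ URel.KinvK).trans (map_one _)

lemma UE_pow_p : UE p ^ p = 0 := by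
  rw [UE, ← map_pow]
  exact (RingQuot.mkAlgHom_rel ℂ URel.Epow).trans (map_zero _)

lemma UF_pow_p : UF p ^ p = 0 := by
  rw [UF, ← map_pow]
  exact (RingQuot.mkAlgHom_rel ℂ URel.Fpow).trans (map_zero _)

lemma UK_pow_2p : UK p ^ (2 * p) = 1 := by
  rw [UK, ← map_pow]
  exact (RingQuot.mkAlgHom_rel ℂ URel.Kpow).trans (map_one _)

lemma UKEKinv : UK p * UE p * UKinv p = qq p ^ 2 • UE p := by
  rw [UK, UE, UKinv, ← map_mul, ← map_mul]
  exact (RingQuot.mkAlgHom_rel ℂ URel.KE).trans (map_smul _ _ _)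

lemma UKFKinv : UK p * UF p * UKinv p = (qq p ^ 2)⁻¹ • UF p := by
  rw [UK, UF, UKinv, ← map_mul, ← map_mul]
  exact (RingQuot.mkAlgHom_rel ℂ URel.KF).trans (map_smul _ _ _)

lemma UEF : UE p * UF p - UF p * UE p
    = (qq p - (qq p)⁻¹)⁻¹ • (UK p - UKinv p) := by
  rw [UK, UE, UF, UKinv, ← map_mul, ← map_mul, ← map_sub, ← map_sub]
  exact (RingQuot.mkAlgHom_rel ℂ URel.EF).trans (map_smul _ _ _)

end QChar


section QChar2

variable (p : ℕ)

lemma UK_mul_UE : UK p * UE p = qq p ^ 2 • (UE p * UK p) := by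
  have h2 : UK p * UE p * UKinv p * UK p = (qq p ^ 2 • UE p) * UK p := by
    rw [UKEKinv]
  simpa [mul_assoc, UKinv_mul_UK, smul_mul_assoc] using h2

lemma UK_mul_UF : UK p * UF p = (qq p ^ 2)⁻¹ • (UF p * UK p) := by
  have h2 : UK p * UF p * UKinv p * UK p = ((qq p ^ 2)⁻¹ • UF p) * UK p := by
    rw [UKFKinv]
  simpa [mul_assoc, UKinv_mul_UK, smul_mul_assoc] using h2

lemma UE_mul_UKinv : UE p * UKinv p = qq p ^ 2 • (UKinv p * UE p) := by
  calc UE p * UKinv p = (UKinv p * UK p) * (UE p * UKinv p) := by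
        rw [UKinv_mul_UK, one_mul]
    _ = UKinv p * (UK p * UE p * UKinv p) := by simp [mul_assoc]
    _ = UKinv p * (qq p ^ 2 • UE p) := by rw [UKEKinv]
    _ = qq p ^ 2 • (UKinv p * UE p) := (mul_smul_comm _ _ _)

lemma UF_mul_UKinv : UF p * UKinv p = (qq p ^ 2)⁻¹ • (UKinv p * UF p) := by
  calc UF p * UKinv p = (UKinv p * UK p) * (UF p * UKinv p) := by
        rw [UKinv_mul_UK, one_mul]
    _ = UKinv p * (UK p * UF p * UKinv p) := by simp [mul_assoc]
    _ = UKinv p * ((qq p ^ 2)⁻¹ • UF p) := by rw [UKFKinv]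
    _ = (qq p ^ 2)⁻¹ • (UKinv p * UF p) := (mul_smul_comm _ _ _)

lemma qq_sq_ne_zero : (qq p) ^ 2 ≠ 0 := pow_ne_zero _ (qq_ne_zero p)

lemma UKinv_mul_UE : UKinv p * UE p = (qq p ^ 2)⁻¹ • (UE p * UKinv p) := by
  rw [UE_mul_UKinv, smul_smul, inv_mul_cancel₀ (qq_sq_ne_zero p), one_smul]

lemma UKinv_mul_UF : UKinv p * UF p = qq p ^ 2 • (UF p * UKinv p) := by
  rw [UF_mul_UKinv, smul_smul, mul_inv_cancel₀ (qq_sq_ne_zero p), one_smul]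

variable {A : Type*} [Ring A] [Algebra ℂ A]

lemma comm_pow_right {x y : A} {t : ℂ} (h : x * y = t • (y * x)) (n : ℕ) :
    x * y ^ n = t ^ n • (y ^ n * x) := by
  induction n with
  | zero => simp
  | succ n ih =>
    calc x * y ^ (n + 1) = (x * y ^ n) * y := by rw [pow_succ, mul_assoc]
      _ = t ^ n • (y ^ n * (x * y)) := by rw [ih, smul_mul_assoc, mul_assoc]
      _ = t ^ n • (y ^ n * (t • (y * x))) := by rw [h]
      _ = (t ^ n * t) • (y ^ n * (y * x)) := by
          rw [mul_smul_comm, smul_smul]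
      _ = t ^ (n + 1) • (y ^ (n + 1) * x) := by
          rw [← pow_succ, ← mul_assoc, ← pow_succ]

lemma comm_pow_left {x y : A} {t : ℂ} (h : x * y = t • (y * x)) (n : ℕ) :
    x ^ n * y = t ^ n • (y * x ^ n) := by
  induction n with
  | zero => simp
  | succ n ih =>
    calc x ^ (n + 1) * y = x ^ n * (x * y) := by rw [pow_succ, mul_assoc]
      _ = x ^ n * (t • (y * x)) := by rw [h]
      _ = t • ((x ^ n * y) * x) := by rw [mul_smul_comm, mul_assoc]
      _ = t • ((t ^ n • (y * x ^ n)) * x) := by rw [ih]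
      _ = (t ^ n * t) • (y * x ^ (n + 1)) := by
          rw [smul_mul_assoc, smul_smul, mul_assoc, ← pow_succ, mul_comm t]
      _ = t ^ (n + 1) • (y * x ^ (n + 1)) := by rw [← pow_succ]

end QChar2


section QChar3

variable (p : ℕ)

/-- `cc = (q - q⁻¹)⁻¹`. -/
def ccq (p : ℕ) : ℂ := (qq p - (qq p)⁻¹)⁻¹

/-- `A_n = Σ_{i<n} q^{-2i}`. -/
def rA (p n : ℕ) : ℂ := ∑ i ∈ range n, ((qq p ^ 2)⁻¹) ^ i

/-- `B_n = Σ_{i<n} q^{2i}`. -/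
def rB (p n : ℕ) : ℂ := ∑ i ∈ range n, (qq p ^ 2) ^ i

lemma rA_succ (n : ℕ) : rA p (n + 1) = 1 + (qq p ^ 2)⁻¹ * rA p n := by
  rw [rA, rA, Finset.sum_range_succ', pow_zero, Finset.mul_sum]
  simp [pow_succ, mul_comm, add_comm]

lemma rB_succ (n : ℕ) : rB p (n + 1) = 1 + qq p ^ 2 * rB p n := by
  rw [rB, rB, Finset.sum_range_succ', pow_zero, Finset.mul_sum]
  simp [pow_succ, mul_comm, add_comm]

lemma rA_one : rA p 1 = 1 := by simp [rA]

lemma rB_one : rB p 1 = 1 := by simp [rB]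

lemma UE_mul_UF : UE p * UF p = UF p * UE p + ccq p • (UK p - UKinv p) := by
  rw [ccq, ← UEF p]; abel

lemma UF_mul_UE : UF p * UE p = UE p * UF p - ccq p • (UK p - UKinv p) := by
  rw [ccq, ← UEF p]; abel

lemma UE_mul_UFpow (n : ℕ) :
    UE p * UF p ^ (n + 1) = UF p ^ (n + 1) * UE p
      + ccq p • (rA p (n + 1) • (UF p ^ n * UK p)
        - rB p (n + 1) • (UF p ^ n * UKinv p)) := by
  induction n with
  | zero =>
    simp only [zero_add, pow_one, pow_zero, one_mul, rA_one, rB_one, one_smul]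
    exact UE_mul_UF p
  | succ n ih =>
    have h1 : UE p * UF p ^ (n + 2) = (UE p * UF p ^ (n + 1)) * UF p := by
      rw [mul_assoc, ← pow_succ]
    rw [h1, ih]
    simp only [add_mul, sub_mul, smul_mul_assoc, mul_assoc]
    rw [UK_mul_UF, UKinv_mul_UF, UE_mul_UF, rA_succ p (n + 1), rB_succ p (n + 1)]
    simp only [mul_smul_comm, smul_mul_assoc, smul_smul, mul_add, mul_sub,
      add_mul, sub_mul, smul_sub, smul_add, ← mul_assoc, ← pow_succ]
    module

lemma UF_mul_UEpow (n : ℕ) :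
    UF p * UE p ^ (n + 1) = UE p ^ (n + 1) * UF p
      - ccq p • (rB p (n + 1) • (UE p ^ n * UK p)
        - rA p (n + 1) • (UE p ^ n * UKinv p)) := by
  induction n with
  | zero =>
    simp only [zero_add, pow_one, pow_zero, one_mul, rA_one, rB_one, one_smul]
    exact UF_mul_UE p
  | succ n ih =>
    have h1 : UF p * UE p ^ (n + 2) = (UF p * UE p ^ (n + 1)) * UE p := by
      rw [mul_assoc, ← pow_succ]
    rw [h1, ih]
    simp only [add_mul, sub_mul, smul_mul_assoc, mul_assoc]
    rw [UK_mul_UE, UKinv_mul_UE, UF_mul_UE, rA_succ p (n + 1), rB_succ p (n + 1)]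
    simp only [mul_smul_comm, smul_mul_assoc, smul_smul, mul_add, mul_sub,
      add_mul, sub_mul, smul_sub, smul_add, ← mul_assoc, ← pow_succ]
    module

end QChar3


section QChar4

variable (p : ℕ)

/-- PBW monomial `E^a F^b K^c`. -/
def mono (a b c : ℕ) : Uq p := UE p ^ a * UF p ^ b * UK p ^ c

/-- decrement of `c` modulo `2p`. -/
def cpred (c : ℕ) : ℕ := if c = 0 then 2 * p - 1 else c - 1

lemma commute_UKinv_UK : Commute (UKinv p) (UK p) := by
  unfold Commute SemiconjBy
  rw [UKinv_mul_UK, UK_mul_UKinv]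

lemma UKinv_eq (hp : 1 ≤ p) : UKinv p = UK p ^ (2 * p - 1) := by
  have h : UK p ^ (2 * p) = UK p * UK p ^ (2 * p - 1) := by
    rw [← pow_succ']
    congr 1
    omega
  calc UKinv p = UKinv p * UK p ^ (2 * p) := by rw [UK_pow_2p, mul_one]
    _ = (UKinv p * UK p) * UK p ^ (2 * p - 1) := by rw [h, ← mul_assoc]
    _ = UK p ^ (2 * p - 1) := by rw [UKinv_mul_UK, one_mul]

lemma UKpow_mul_UKinv (hp : 1 ≤ p) (c : ℕ) :
    UK p ^ c * UKinv p = UK p ^ cpred p c := by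
  cases c with
  | zero => rw [pow_zero, one_mul, UKinv_eq p hp, cpred, if_pos rfl]
  | succ d =>
    rw [cpred, if_neg (Nat.succ_ne_zero d), Nat.succ_sub_one, pow_succ,
      mul_assoc, UK_mul_UKinv, mul_one]

lemma UKinv_mul_UKpow (hp : 1 ≤ p) (c : ℕ) :
    UKinv p * UK p ^ c = UK p ^ cpred p c := by
  rw [((commute_UKinv_UK p).pow_right c).eq, UKpow_mul_UKinv p hp]

lemma UE_mul_mono (a b c : ℕ) : UE p * mono p a b c = mono p (a + 1) b c := by
  simp only [mono, ← mul_assoc, ← pow_succ']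

lemma mono_mul_UK (a b c : ℕ) : mono p a b c * UK p = mono p a b (c + 1) := by
  simp only [mono, mul_assoc, ← pow_succ]

lemma mono_mul_UKinv (hp : 1 ≤ p) (a b c : ℕ) :
    mono p a b c * UKinv p = mono p a b (cpred p c) := by
  simp only [mono, mul_assoc, UKpow_mul_UKinv p hp]

lemma mono_mul_UF (a b c : ℕ) :
    mono p a b c * UF p = ((qq p ^ 2)⁻¹) ^ c • mono p a (b + 1) c := by
  have h : UK p ^ c * UF p = ((qq p ^ 2)⁻¹) ^ c • (UF p * UK p ^ c) :=
    comm_pow_left (UK_mul_UF p) c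
  simp only [mono, mul_assoc, h, mul_smul_comm]
  simp only [← mul_assoc, ← pow_succ]

lemma UK_mul_mono (a b c : ℕ) :
    UK p * mono p a b c
      = ((qq p ^ 2) ^ a * ((qq p ^ 2)⁻¹) ^ b) • mono p a b (c + 1) := by
  have h1 : UK p * UE p ^ a = (qq p ^ 2) ^ a • (UE p ^ a * UK p) :=
    comm_pow_right (UK_mul_UE p) a
  have h2 : UK p * UF p ^ b = ((qq p ^ 2)⁻¹) ^ b • (UF p ^ b * UK p) :=
    comm_pow_right (UK_mul_UF p) b
  calc UK p * mono p a b c = (UK p * UE p ^ a) * (UF p ^ b * UK p ^ c) := by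
        simp only [mono, mul_assoc]
    _ = (qq p ^ 2) ^ a • (UE p ^ a * ((UK p * UF p ^ b) * UK p ^ c)) := by
        rw [h1, smul_mul_assoc, mul_assoc, ← mul_assoc (UK p)]
    _ = ((qq p ^ 2) ^ a * ((qq p ^ 2)⁻¹) ^ b)
          • (UE p ^ a * (UF p ^ b * (UK p * UK p ^ c))) := by
        rw [h2, smul_mul_assoc, mul_smul_comm, smul_smul, mul_assoc]
    _ = ((qq p ^ 2) ^ a * ((qq p ^ 2)⁻¹) ^ b) • mono p a b (c + 1) := by
        rw [← pow_succ']; simp only [mono, mul_assoc]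

lemma UKinv_mul_mono (hp : 1 ≤ p) (a b c : ℕ) :
    UKinv p * mono p a b c
      = (((qq p ^ 2)⁻¹) ^ a * (qq p ^ 2) ^ b) • mono p a b (cpred p c) := by
  have h1 : UKinv p * UE p ^ a = ((qq p ^ 2)⁻¹) ^ a • (UE p ^ a * UKinv p) :=
    comm_pow_right (UKinv_mul_UE p) a
  have h2 : UKinv p * UF p ^ b = (qq p ^ 2) ^ b • (UF p ^ b * UKinv p) :=
    comm_pow_right (UKinv_mul_UF p) b
  calc UKinv p * mono p a b c
      = (UKinv p * UE p ^ a) * (UF p ^ b * UK p ^ c) := by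
        simp only [mono, mul_assoc]
    _ = ((qq p ^ 2)⁻¹) ^ a • (UE p ^ a * ((UKinv p * UF p ^ b) * UK p ^ c)) := by
        rw [h1, smul_mul_assoc, mul_assoc, ← mul_assoc (UKinv p)]
    _ = (((qq p ^ 2)⁻¹) ^ a * (qq p ^ 2) ^ b)
          • (UE p ^ a * (UF p ^ b * (UKinv p * UK p ^ c))) := by
        rw [h2, smul_mul_assoc, mul_smul_comm, smul_smul, mul_assoc]
    _ = (((qq p ^ 2)⁻¹) ^ a * (qq p ^ 2) ^ b) • mono p a b (cpred p c) := by
        rw [UKinv_mul_UKpow p hp]; simp only [mono, mul_assoc]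

lemma mono_mul_UE (hp : 1 ≤ p) (a b c : ℕ) :
    mono p a b c * UE p
      = (qq p ^ 2) ^ c • mono p (a + 1) b c
        - ((qq p ^ 2) ^ c * ccq p * rA p b) • mono p a (b - 1) (c + 1)
        + ((qq p ^ 2) ^ c * ccq p * rB p b) • mono p a (b - 1) (cpred p c) := by
  have hK : UK p ^ c * UE p = (qq p ^ 2) ^ c • (UE p * UK p ^ c) :=
    comm_pow_left (UK_mul_UE p) c
  cases b with
  | zero =>
    simp only [rA, rB, Finset.sum_range_zero, mul_zero, zero_smul,
      sub_zero, add_zero]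
    calc mono p a 0 c * UE p = UE p ^ a * (UK p ^ c * UE p) := by
          simp only [mono, pow_zero, mul_one, mul_assoc]
      _ = (qq p ^ 2) ^ c • (UE p ^ a * (UE p * UK p ^ c)) := by
          rw [hK, mul_smul_comm]
      _ = (qq p ^ 2) ^ c • mono p (a + 1) 0 c := by
          rw [← mul_assoc, ← pow_succ]
          simp only [mono, pow_zero, mul_one]
  | succ m =>
    have hFE : UF p ^ (m + 1) * UE p = UE p * UF p ^ (m + 1)
        - ccq p • (rA p (m + 1) • (UF p ^ m * UK p)
          - rB p (m + 1) • (UF p ^ m * UKinv p)) := by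
      rw [UE_mul_UFpow]; abel
    calc mono p a (m + 1) c * UE p
        = UE p ^ a * (UF p ^ (m + 1) * ((qq p ^ 2) ^ c • (UE p * UK p ^ c))) := by
          simp only [mono, mul_assoc, hK]
      _ = (qq p ^ 2) ^ c • (UE p ^ a * ((UF p ^ (m + 1) * UE p) * UK p ^ c)) := by
          rw [mul_smul_comm, mul_smul_comm, mul_assoc]
      _ = (qq p ^ 2) ^ c • (UE p ^ a * ((UE p * UF p ^ (m + 1)
            - ccq p • (rA p (m + 1) • (UF p ^ m * UK p)
              - rB p (m + 1) • (UF p ^ m * UKinv p))) * UK p ^ c)) := by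
          rw [hFE]
      _ = (qq p ^ 2) ^ c • (UE p ^ a * (UE p * (UF p ^ (m + 1) * UK p ^ c)))
          - ((qq p ^ 2) ^ c * ccq p * rA p (m + 1))
              • (UE p ^ a * (UF p ^ m * (UK p * UK p ^ c)))
          + ((qq p ^ 2) ^ c * ccq p * rB p (m + 1))
              • (UE p ^ a * (UF p ^ m * (UKinv p * UK p ^ c))) := by
          simp only [sub_mul, smul_mul_assoc, smul_sub, smul_smul, mul_sub,
            mul_smul_comm, mul_assoc]
          module
      _ = (qq p ^ 2) ^ c • mono p (a + 1) (m + 1) c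
          - ((qq p ^ 2) ^ c * ccq p * rA p (m + 1)) • mono p a m (c + 1)
          + ((qq p ^ 2) ^ c * ccq p * rB p (m + 1)) • mono p a m (cpred p c) := by
          rw [UKinv_mul_UKpow p hp]
          simp only [← pow_succ']
          simp only [mono, ← mul_assoc, ← pow_succ]

lemma UF_mul_mono (hp : 1 ≤ p) (a b c : ℕ) :
    UF p * mono p a b c
      = mono p a (b + 1) c
        - (ccq p * rB p a * ((qq p ^ 2)⁻¹) ^ b) • mono p (a - 1) b (c + 1)
        + (ccq p * rA p a * (qq p ^ 2) ^ b) • mono p (a - 1) b (cpred p c) := by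
  have hKF : UK p * UF p ^ b = ((qq p ^ 2)⁻¹) ^ b • (UF p ^ b * UK p) :=
    comm_pow_right (UK_mul_UF p) b
  have hKinvF : UKinv p * UF p ^ b = (qq p ^ 2) ^ b • (UF p ^ b * UKinv p) :=
    comm_pow_right (UKinv_mul_UF p) b
  have hF : UF p * (UF p ^ b * UK p ^ c) = UF p ^ (b + 1) * UK p ^ c := by
    rw [← mul_assoc, ← pow_succ']
  cases a with
  | zero =>
    simp only [rA, rB, Finset.sum_range_zero, mul_zero, zero_mul, zero_smul,
      sub_zero, add_zero]
    simp only [mono, pow_zero, one_mul, ← mul_assoc, ← pow_succ']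
  | succ m =>
    calc UF p * mono p (m + 1) b c
        = (UF p * UE p ^ (m + 1)) * (UF p ^ b * UK p ^ c) := by
          simp only [mono, mul_assoc]
      _ = (UE p ^ (m + 1) * UF p
            - ccq p • (rB p (m + 1) • (UE p ^ m * UK p)
              - rA p (m + 1) • (UE p ^ m * UKinv p)))
            * (UF p ^ b * UK p ^ c) := by rw [UF_mul_UEpow]
      _ = UE p ^ (m + 1) * (UF p ^ (b + 1) * UK p ^ c)
          - (ccq p * rB p (m + 1))
              • (UE p ^ m * ((UK p * UF p ^ b) * UK p ^ c))
          + (ccq p * rA p (m + 1))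
              • (UE p ^ m * ((UKinv p * UF p ^ b) * UK p ^ c)) := by
          simp only [sub_mul, smul_mul_assoc, smul_sub, smul_smul, mul_assoc]
          rw [hF]
          module
      _ = UE p ^ (m + 1) * (UF p ^ (b + 1) * UK p ^ c)
          - (ccq p * rB p (m + 1) * ((qq p ^ 2)⁻¹) ^ b)
              • (UE p ^ m * (UF p ^ b * (UK p * UK p ^ c)))
          + (ccq p * rA p (m + 1) * (qq p ^ 2) ^ b)
              • (UE p ^ m * (UF p ^ b * (UKinv p * UK p ^ c))) := by
          rw [hKF, hKinvF]
          simp only [smul_mul_assoc, mul_smul_comm, smul_smul, mul_assoc]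
          try module
      _ = mono p (m + 1) (b + 1) c
          - (ccq p * rB p (m + 1) * ((qq p ^ 2)⁻¹) ^ b) • mono p m b (c + 1)
          + (ccq p * rA p (m + 1) * (qq p ^ 2) ^ b) • mono p m b (cpred p c) := by
          rw [UKinv_mul_UKpow p hp]
          simp only [← pow_succ']
          simp only [mono, ← mul_assoc]

end QChar4


section QChar5

variable (p : ℕ)

lemma mono_wrap (a b : ℕ) : mono p a b (2 * p) = mono p a b 0 := by
  rw [mono, mono, UK_pow_2p, pow_zero]

lemma muval (hp : 2 ≤ p) {μ : Uq p →ₗ[ℂ] ℂ} (hμ : IsMu p μ) {a b c : ℕ}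
    (ha : a < p) (hb : b < p) (hc : c ≤ 2 * p) :
    μ (mono p a b c) = if a = p - 1 ∧ b = p - 1 ∧ c = p + 1 then
      -((Real.sqrt (2 / (p : ℝ)) : ℂ)) * (qfac p (p - 1)) ^ 2 else 0 := by
  rcases lt_or_eq_of_le hc with h | h
  · exact hμ a b c ha hb h
  · subst h
    rw [mono_wrap, mono, hμ a b 0 ha hb (by omega)]
    rw [if_neg (by rintro ⟨-, -, h⟩; omega), if_neg (by rintro ⟨-, -, h⟩; omega)]

/-- The span of the PBW monomials. -/
def Vspan : Submodule ℂ (Uq p) :=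
  Submodule.span ℂ {x | ∃ a b c, a < p ∧ b < p ∧ c < 2 * p ∧ x = mono p a b c}

lemma cpred_lt (hp : 1 ≤ p) {c : ℕ} (hc : c ≤ 2 * p) : cpred p c < 2 * p := by
  unfold cpred; split <;> omega

lemma mono_mem_V_aux (hp : 1 ≤ p) {a b c : ℕ} (ha : a ≤ p) (hb : b ≤ p)
    (hc : c < 2 * p) : mono p a b c ∈ Vspan p := by
  rcases eq_or_lt_of_le ha with h | ha'
  · subst h
    rw [mono, UE_pow_p, zero_mul, zero_mul]
    exact zero_mem _
  rcases eq_or_lt_of_le hb with h | hb'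
  · subst h
    rw [mono, UF_pow_p, mul_zero, zero_mul]
    exact zero_mem _
  exact Submodule.subset_span ⟨a, b, c, ha', hb', hc, rfl⟩

lemma mono_mem_V (hp : 1 ≤ p) {a b c : ℕ} (ha : a ≤ p) (hb : b ≤ p)
    (hc : c ≤ 2 * p) : mono p a b c ∈ Vspan p := by
  rcases eq_or_lt_of_le hc with h | hc'
  · subst h
    rw [mono_wrap]
    exact mono_mem_V_aux p hp ha hb (by omega)
  exact mono_mem_V_aux p hp ha hb hc' 

lemma one_mem_V (hp : 1 ≤ p) : (1 : Uq p) ∈ Vspan p := by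
  have h := mono_mem_V p hp (a := 0) (b := 0) (c := 0)
    (by omega) (by omega) (by omega)
  simpa [mono] using h

lemma UE_mul_mem_V (hp : 1 ≤ p) {v : Uq p} (hv : v ∈ Vspan p) :
    UE p * v ∈ Vspan p := by
  induction hv using Submodule.span_induction with
  | mem x hx =>
    obtain ⟨a, b, c, ha, hb, hc, rfl⟩ := hx
    rw [UE_mul_mono]
    exact mono_mem_V p hp (by omega) (by omega) (by omega)
  | zero => rw [mul_zero]; exact zero_mem _
  | add x y _ _ hx hy => rw [mul_add]; exact add_mem hx hy
  | smul t x _ hx => rw [mul_smul_comm]; exact Submodule.smul_mem _ _ hx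

lemma UK_mul_mem_V (hp : 1 ≤ p) {v : Uq p} (hv : v ∈ Vspan p) :
    UK p * v ∈ Vspan p := by
  induction hv using Submodule.span_induction with
  | mem x hx =>
    obtain ⟨a, b, c, ha, hb, hc, rfl⟩ := hx
    rw [UK_mul_mono]
    exact Submodule.smul_mem _ _
      (mono_mem_V p hp (by omega) (by omega) (by omega))
  | zero => rw [mul_zero]; exact zero_mem _
  | add x y _ _ hx hy => rw [mul_add]; exact add_mem hx hy
  | smul t x _ hx => rw [mul_smul_comm]; exact Submodule.smul_mem _ _ hx

lemma UKinv_mul_mem_V (hp : 1 ≤ p) {v : Uq p} (hv : v ∈ Vspan p) :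
    UKinv p * v ∈ Vspan p := by
  induction hv using Submodule.span_induction with
  | mem x hx =>
    obtain ⟨a, b, c, ha, hb, hc, rfl⟩ := hx
    rw [UKinv_mul_mono p hp]
    exact Submodule.smul_mem _ _
      (mono_mem_V p hp (by omega) (by omega) (le_of_lt (cpred_lt p hp (le_of_lt hc))))
  | zero => rw [mul_zero]; exact zero_mem _
  | add x y _ _ hx hy => rw [mul_add]; exact add_mem hx hy
  | smul t x _ hx => rw [mul_smul_comm]; exact Submodule.smul_mem _ _ hx

lemma UF_mul_mem_V (hp : 1 ≤ p) {v : Uq p} (hv : v ∈ Vspan p) :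
    UF p * v ∈ Vspan p := by
  induction hv using Submodule.span_induction with
  | mem x hx =>
    obtain ⟨a, b, c, ha, hb, hc, rfl⟩ := hx
    rw [UF_mul_mono p hp]
    refine add_mem (sub_mem ?_ (Submodule.smul_mem _ _ ?_))
      (Submodule.smul_mem _ _ ?_)
    · exact mono_mem_V p hp (by omega) (by omega) (by omega)
    · exact mono_mem_V p hp (by omega) (by omega) (by omega)
    · exact mono_mem_V p hp (by omega) (by omega) (le_of_lt (cpred_lt p hp (le_of_lt hc)))
  | zero => rw [mul_zero]; exact zero_mem _
  | add x y _ _ hx hy => rw [mul_add]; exact add_mem hx hy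
  | smul t x _ hx => rw [mul_smul_comm]; exact Submodule.smul_mem _ _ hx

lemma mem_V_all (hp : 1 ≤ p) (u : Uq p) : u ∈ Vspan p := by
  obtain ⟨z, rfl⟩ := RingQuot.mkAlgHom_surjective ℂ (URel p) u
  suffices h : ∀ v ∈ Vspan p, (RingQuot.mkAlgHom ℂ (URel p)) z * v ∈ Vspan p by
    simpa using h 1 (one_mem_V p hp)
  induction z using FreeAlgebra.induction with
  | grade0 t =>
    intro v hv
    rw [AlgHom.commutes, ← Algebra.smul_def]
    exact Submodule.smul_mem _ _ hv
  | grade1 g =>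
    intro v hv
    cases g with
    | E => exact UE_mul_mem_V p hp hv
    | F => exact UF_mul_mem_V p hp hv
    | K => exact UK_mul_mem_V p hp hv
    | Kinv => exact UKinv_mul_mem_V p hp hv
  | mul x y hx hy =>
    intro v hv
    rw [map_mul, mul_assoc]
    exact hx _ (hy _ hv)
  | add x y hx hy =>
    intro v hv
    rw [map_add, add_mul]
    exact add_mem (hx v hv) (hy v hv)

end QChar5


section QChar6

variable (p : ℕ)

lemma r_pow_p (hp : 2 ≤ p) : (qq p ^ 2) ^ p = 1 := by
  rw [← pow_mul]
  exact qq_pow_two_p p hp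

lemma r_pow_p1 (hp : 2 ≤ p) : (qq p ^ 2) ^ (p + 1) = qq p ^ 2 := by
  rw [pow_succ, r_pow_p p hp, one_mul]

lemma s_pow_p1 (hp : 2 ≤ p) : ((qq p ^ 2)⁻¹) ^ (p + 1) = (qq p ^ 2)⁻¹ := by
  rw [inv_pow, r_pow_p1 p hp]

lemma muval' (hp : 2 ≤ p) {μ : Uq p →ₗ[ℂ] ℂ} (hμ : IsMu p μ) {a b c : ℕ}
    (ha : a ≤ p) (hb : b ≤ p) (hc : c ≤ 2 * p) :
    μ (mono p a b c) = if a = p - 1 ∧ b = p - 1 ∧ c = p + 1 then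
      -((Real.sqrt (2 / (p : ℝ)) : ℂ)) * (qfac p (p - 1)) ^ 2 else 0 := by
  rcases eq_or_lt_of_le ha with h | ha'
  · subst h
    rw [mono, UE_pow_p, zero_mul, zero_mul, map_zero,
      if_neg (by rintro ⟨h1, -, -⟩; omega)]
  rcases eq_or_lt_of_le hb with h | hb'
  · subst h
    rw [mono, UF_pow_p, mul_zero, zero_mul, map_zero,
      if_neg (by rintro ⟨-, h2, -⟩; omega)]
  exact muval p hp hμ ha' hb' hc

lemma mu_id_K (hp : 2 ≤ p) {μ : Uq p →ₗ[ℂ] ℂ} (hμ : IsMu p μ) (x : Uq p) :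
    μ (x * UK p) = μ (UK p * x) := by
  have hx := mem_V_all p (by omega) x
  induction hx using Submodule.span_induction with
  | mem v hv =>
    obtain ⟨a, b, c, ha, hb, hc, rfl⟩ := hv
    rw [mono_mul_UK, UK_mul_mono, map_smul, smul_eq_mul,
      muval' p hp hμ (by omega) (by omega) (by omega)]
    by_cases h : a = p - 1 ∧ b = p - 1 ∧ c + 1 = p + 1
    · obtain ⟨h1, h2, h3⟩ := h
      rw [if_pos ⟨h1, h2, h3⟩, h1, h2, ← mul_pow,
        mul_inv_cancel₀ (qq_sq_ne_zero p), one_pow, one_mul]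
    · rw [if_neg h, mul_zero]
  | zero => simp
  | add u v _ _ hu hv => rw [add_mul, mul_add, map_add, map_add, hu, hv]
  | smul t u _ hu =>
    rw [smul_mul_assoc, mul_smul_comm, map_smul, map_smul, hu]

lemma mu_id_Kinv (hp : 2 ≤ p) {μ : Uq p →ₗ[ℂ] ℂ} (hμ : IsMu p μ) (x : Uq p) :
    μ (x * UKinv p) = μ (UKinv p * x) := by
  have hx := mem_V_all p (by omega) x
  induction hx using Submodule.span_induction with
  | mem v hv =>
    obtain ⟨a, b, c, ha, hb, hc, rfl⟩ := hv
    rw [mono_mul_UKinv p (by omega), UKinv_mul_mono p (by omega), map_smul,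
      smul_eq_mul, muval' p hp hμ (by omega) (by omega)
        (le_of_lt (cpred_lt p (by omega) (le_of_lt hc)))]
    by_cases h : a = p - 1 ∧ b = p - 1 ∧ cpred p c = p + 1
    · obtain ⟨h1, h2, h3⟩ := h
      rw [if_pos ⟨h1, h2, h3⟩, h1, h2, ← mul_pow,
        inv_mul_cancel₀ (qq_sq_ne_zero p), one_pow, one_mul]
    · rw [if_neg h, mul_zero]
  | zero => simp
  | add u v _ _ hu hv => rw [add_mul, mul_add, map_add, map_add, hu, hv]
  | smul t u _ hu =>
    rw [smul_mul_assoc, mul_smul_comm, map_smul, map_smul, hu]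

lemma mu_id_E (hp : 2 ≤ p) {μ : Uq p →ₗ[ℂ] ℂ} (hμ : IsMu p μ) (x : Uq p) :
    μ (x * UE p) = qq p ^ 2 * μ (UE p * x) := by
  have hx := mem_V_all p (by omega) x
  induction hx using Submodule.span_induction with
  | mem v hv =>
    obtain ⟨a, b, c, ha, hb, hc, rfl⟩ := hv
    rw [mono_mul_UE p (by omega), UE_mul_mono, map_add, map_sub, map_smul,
      map_smul, map_smul, smul_eq_mul, smul_eq_mul, smul_eq_mul,
      muval' p hp hμ (by omega) (by omega) (by omega),
      muval' p hp hμ (by omega) (by omega) (by omega),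
      muval' p hp hμ (by omega) (by omega)
        (le_of_lt (cpred_lt p (by omega) (le_of_lt hc))),
      if_neg (show ¬(a = p - 1 ∧ b - 1 = p - 1 ∧ c + 1 = p + 1) by
        rintro ⟨-, h2, -⟩; omega),
      if_neg (show ¬(a = p - 1 ∧ b - 1 = p - 1 ∧ cpred p c = p + 1) by
        rintro ⟨-, h2, -⟩; omega), mul_zero, mul_zero, sub_zero, add_zero]
    by_cases h : a + 1 = p - 1 ∧ b = p - 1 ∧ c = p + 1
    · obtain ⟨h1, h2, h3⟩ := h
      rw [if_pos ⟨h1, h2, h3⟩, h3, r_pow_p1 p hp]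
    · rw [if_neg h, mul_zero, mul_zero]
  | zero => simp
  | add u v _ _ hu hv =>
    rw [add_mul, mul_add, map_add, map_add, hu, hv, mul_add]
  | smul t u _ hu =>
    rw [smul_mul_assoc, mul_smul_comm, map_smul, map_smul, hu, smul_eq_mul,
      smul_eq_mul]
    ring

lemma mu_id_F (hp : 2 ≤ p) {μ : Uq p →ₗ[ℂ] ℂ} (hμ : IsMu p μ) (x : Uq p) :
    μ (x * UF p) = (qq p ^ 2)⁻¹ * μ (UF p * x) := by
  have hx := mem_V_all p (by omega) x
  induction hx using Submodule.span_induction with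
  | mem v hv =>
    obtain ⟨a, b, c, ha, hb, hc, rfl⟩ := hv
    rw [mono_mul_UF, UF_mul_mono p (by omega), map_add, map_sub, map_smul,
      map_smul, map_smul, smul_eq_mul, smul_eq_mul,
      muval' p hp hμ (by omega) (by omega) (by omega),
      muval' p hp hμ (by omega) (by omega) (by omega),
      muval' p hp hμ (by omega) (by omega)
        (le_of_lt (cpred_lt p (by omega) (le_of_lt hc))),
      if_neg (show ¬(a - 1 = p - 1 ∧ b = p - 1 ∧ c + 1 = p + 1) by
        rintro ⟨h1, -, -⟩; omega),
      if_neg (show ¬(a - 1 = p - 1 ∧ b = p - 1 ∧ cpred p c = p + 1) by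
        rintro ⟨h1, -, -⟩; omega)]
    rw [mul_zero, sub_zero, smul_zero, add_zero]
    by_cases h : a = p - 1 ∧ b + 1 = p - 1 ∧ c = p + 1
    · obtain ⟨h1, h2, h3⟩ := h
      rw [if_pos ⟨h1, h2, h3⟩, h3, s_pow_p1 p hp]
    · rw [if_neg h, mul_zero, mul_zero]
  | zero => simp
  | add u v _ _ hu hv =>
    rw [add_mul, mul_add, map_add, map_add, hu, hv, mul_add]
  | smul t u _ hu =>
    rw [smul_mul_assoc, mul_smul_comm, map_smul, map_smul, hu, smul_eq_mul,
      smul_eq_mul]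
    ring

end QChar6

end LogHennings
open LogHennings in
/-- The right integral `μ` is a quantum character: `μ(xy) = μ(S²(y) x)`. -/
theorem mu_is_quantum_character (p : ℕ) (hp : 2 ≤ p) :
    ∀ (μ : Uq p →ₗ[ℂ] ℂ) (S : Uq p →ₗ[ℂ] Uq p), IsMu p μ → IsAntipodeU p S →
      ∀ x y : Uq p, μ (x * y) = μ (S (S y) * x) := by
  intro μ S hμ hS
  obtain ⟨hS1, hS2, hSE, hSF, hSK, hSKi⟩ := hS
  have hneg : ∀ u : Uq p, -u = (-1 : ℂ) • u := fun u => (neg_one_smul ℂ u).symm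
  have hone : ((-1 : ℂ) * (-1 : ℂ)) = 1 := by norm_num
  have hSSE : S (S (UE p)) = qq p ^ 2 • UE p := by
    rw [hSE, hneg, map_smul, hS2, hSKi, hSE, hneg, mul_smul_comm, smul_smul,
      hone, one_smul, ← mul_assoc, UK_mul_UE, smul_mul_assoc, mul_assoc,
      UK_mul_UKinv, mul_one]
  have hSSF : S (S (UF p)) = (qq p ^ 2)⁻¹ • UF p := by
    rw [hSF, hneg, map_smul, hS2, hSK, hSF, hneg, smul_mul_assoc, smul_smul,
      hone, one_smul, UK_mul_UF, smul_mul_assoc, mul_assoc, UK_mul_UKinv,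
      mul_one]
  have hSS1 : S (S (1 : Uq p)) = 1 := by rw [hS1, hS1]
  have hSSmul : ∀ u v : Uq p, S (S (u * v)) = S (S u) * S (S v) := by
    intro u v
    rw [hS2, hS2]
  intro x y
  obtain ⟨z, rfl⟩ := RingQuot.mkAlgHom_surjective ℂ (URel p) y
  revert x
  induction z using FreeAlgebra.induction with
  | grade0 t =>
    intro x
    rw [AlgHom.commutes, Algebra.algebraMap_eq_smul_one, map_smul, map_smul,
      hSS1, mul_smul_comm, mul_one, smul_mul_assoc, one_mul]
  | grade1 g =>
    intro x
    cases g with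
    | E =>
      show μ (x * UE p) = μ (S (S (UE p)) * x)
      rw [hSSE, smul_mul_assoc, map_smul, smul_eq_mul]
      exact mu_id_E p hp hμ x
    | F =>
      show μ (x * UF p) = μ (S (S (UF p)) * x)
      rw [hSSF, smul_mul_assoc, map_smul, smul_eq_mul]
      exact mu_id_F p hp hμ x
    | K =>
      show μ (x * UK p) = μ (S (S (UK p)) * x)
      rw [hSK, hSKi]
      exact mu_id_K p hp hμ x
    | Kinv =>
      show μ (x * UKinv p) = μ (S (S (UKinv p)) * x)
      rw [hSKi, hSK]
      exact mu_id_Kinv p hp hμ x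
  | mul z1 z2 h1 h2 =>
    intro x
    rw [map_mul (RingQuot.mkAlgHom ℂ (URel p))]
    calc μ (x * (RingQuot.mkAlgHom ℂ (URel p) z1
            * RingQuot.mkAlgHom ℂ (URel p) z2))
        = μ ((x * RingQuot.mkAlgHom ℂ (URel p) z1)
            * RingQuot.mkAlgHom ℂ (URel p) z2) := by rw [mul_assoc]
      _ = μ (S (S (RingQuot.mkAlgHom ℂ (URel p) z2))
            * (x * RingQuot.mkAlgHom ℂ (URel p) z1)) := h2 _
      _ = μ ((S (S (RingQuot.mkAlgHom ℂ (URel p) z2)) * x)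
            * RingQuot.mkAlgHom ℂ (URel p) z1) := by rw [mul_assoc]
      _ = μ (S (S (RingQuot.mkAlgHom ℂ (URel p) z1))
            * (S (S (RingQuot.mkAlgHom ℂ (URel p) z2)) * x)) := h1 _
      _ = μ ((S (S (RingQuot.mkAlgHom ℂ (URel p) z1))
            * S (S (RingQuot.mkAlgHom ℂ (URel p) z2))) * x) := by
            rw [mul_assoc]
      _ = μ (S (S (RingQuot.mkAlgHom ℂ (URel p) z1
            * RingQuot.mkAlgHom ℂ (URel p) z2)) * x) := by rw [hSSmul]
  | add z1 z2 h1 h2 =>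
    intro x
    simp only [map_add, mul_add, add_mul]
    rw [h1 x, h2 x]
end
end
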